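/- arXiv:2402.13438 — 5 statements merged into one kernel-verified Lean document; each statement's English description precedes it below -/
import Mathlib

section
/- Let Q : L¹(0,1) → L²(0,1) be a bounded surjection mapping the open unit ball of L¹ onto the open unit ball of L², and let I_{2,1} : L²(0,1) → L¹(0,1) be the formal inclusion. Then S = I_{2,1} ∘ Q is a weakly compact operator on L¹(0,1), and the norm closure of S(B°_{L¹}) in L¹ contains every measurable function u on (0,1) with |u(t)| = 1 almost everywhere. -/
open MeasureTheory

/-- An operator is weakly compact if the weak closure of the image of the unit ball is
weakly compact. -/
def IsWeaklyCompactOperator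
    {X Y : Type*} [NormedAddCommGroup X] [NormedSpace ℝ X]
    [NormedAddCommGroup Y] [NormedSpace ℝ Y] (T : X →L[ℝ] Y) : Prop :=
  IsCompact (closure ((toWeakSpaceCLM ℝ Y) '' (T '' Metric.ball 0 1)))

/-- In a real Hilbert space, the image of the closed unit ball under the identity map into the
weak topology is compact. -/
lemma hilbert_weak_closedBall_compact (H : Type*) [NormedAddCommGroup H]
    [InnerProductSpace ℝ H] [CompleteSpace H] :
    IsCompact ((toWeakSpaceCLM ℝ H) '' Metric.closedBall 0 1) := by
  set D := InnerProductSpace.toDual ℝ H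
  -- the map from the weak-* dual back to the weak space, via Riesz representation
  set ψ : WeakDual ℝ H → WeakSpace ℝ H := fun f => toWeakSpaceCLM ℝ H (D.symm f) with hψ
  have hcont : Continuous ψ := by
    apply WeakBilin.continuous_of_continuous_eval
    intro g
    have : (fun f : WeakDual ℝ H => (topDualPairing ℝ H).flip (ψ f) g)
        = fun f : WeakDual ℝ H => f (D.symm g) := by
      funext f
      show g (D.symm f) = f (D.symm g)
      have h1 : g (D.symm f) = (D (D.symm g)) (D.symm f) := by rw [D.apply_symm_apply]
      have h2 : f (D.symm g) = (D (D.symm f)) (D.symm g) := by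
        exact (congrArg (fun φ : StrongDual ℝ H => φ (D.symm g)) (D.apply_symm_apply f)).symm
      rw [h1, h2, InnerProductSpace.toDual_apply_apply, InnerProductSpace.toDual_apply_apply,
        real_inner_comm]
    rw [this]
    exact WeakBilin.eval_continuous _ _
  have hK0 : IsCompact (WeakDual.toStrongDual ⁻¹'
      Metric.closedBall (0 : StrongDual ℝ H) 1) :=
    WeakDual.isCompact_closedBall (𝕜 := ℝ) (0 : StrongDual ℝ H) 1
  have himg : (toWeakSpaceCLM ℝ H) '' Metric.closedBall 0 1
      = ψ '' (WeakDual.toStrongDual ⁻¹' Metric.closedBall (0 : StrongDual ℝ H) 1) := by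
    ext y
    constructor
    · rintro ⟨x, hx, rfl⟩
      simp only [Metric.mem_closedBall, dist_zero_right] at hx
      refine ⟨D x, ?_, ?_⟩
      · show dist (WeakDual.toStrongDual (D x)) 0 ≤ 1
        rw [dist_zero_right]
        rw [show ‖WeakDual.toStrongDual (D x)‖ = ‖D x‖ from rfl, D.norm_map]
        exact hx
      · simp [ψ]
    · rintro ⟨f, hf, rfl⟩
      simp only [Set.mem_preimage, Metric.mem_closedBall, dist_zero_right] at hf
      refine ⟨D.symm f, ?_, rfl⟩
      simp only [Metric.mem_closedBall, dist_zero_right]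
      rw [← D.symm.norm_map (WeakDual.toStrongDual f)] at hf
      exact hf
  rw [himg]
  exact hK0.image hcont

/-- With `Q : L¹(0,1) → L²(0,1)` a metric surjection of open unit balls and
`I_{2,1} : L² → L¹` the formal inclusion, `S = I_{2,1} ∘ Q` is weakly compact and the closure
of `S(B°_{L¹})` contains every unimodular function. -/
theorem unimodular_functions_in_closure_of_image
    (μ : Measure ℝ) (hμ : μ = volume.restrict (Set.Ioo (0:ℝ) 1))
    (I21 : Lp ℝ 2 μ →L[ℝ] Lp ℝ 1 μ)
    (hI21 : ∀ f : Lp ℝ 2 μ, (I21 f : ℝ → ℝ) =ᵐ[μ] (f : ℝ → ℝ))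
    (Q : Lp ℝ 1 μ →L[ℝ] Lp ℝ 2 μ)
    (hQ : Q '' Metric.ball 0 1 = Metric.ball 0 1) :
    IsWeaklyCompactOperator (I21.comp Q) ∧
      ∀ u : Lp ℝ 1 μ, (∀ᵐ t ∂μ, |(u : ℝ → ℝ) t| = 1) →
        u ∈ closure ((I21.comp Q) '' Metric.ball 0 1) := by
  have hμuniv : μ Set.univ = 1 := by
    rw [hμ, Measure.restrict_apply_univ]
    simp [Real.volume_Ioo]
  have hfin : IsFiniteMeasure μ := ⟨by rw [hμuniv]; exact ENNReal.one_lt_top⟩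
  have himage : (I21.comp Q) '' Metric.ball 0 1 = I21 '' (Metric.ball 0 1) := by
    rw [ContinuousLinearMap.coe_comp', Set.image_comp, hQ]
  constructor
  · -- weak compactness
    unfold IsWeaklyCompactOperator
    have hball : IsCompact ((toWeakSpaceCLM ℝ (Lp ℝ 2 μ)) '' Metric.closedBall 0 1) :=
      hilbert_weak_closedBall_compact (Lp ℝ 2 μ)
    have hK : IsCompact ((WeakSpace.map I21) ''
        ((toWeakSpaceCLM ℝ (Lp ℝ 2 μ)) '' Metric.closedBall 0 1)) :=
      hball.image (WeakSpace.map I21).continuous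
    have hsub : (toWeakSpaceCLM ℝ (Lp ℝ 1 μ)) '' ((I21.comp Q) '' Metric.ball 0 1)
        ⊆ (WeakSpace.map I21) ''
          ((toWeakSpaceCLM ℝ (Lp ℝ 2 μ)) '' Metric.closedBall 0 1) := by
      rw [himage]
      rintro - ⟨-, ⟨y, hy, rfl⟩, rfl⟩
      exact ⟨toWeakSpaceCLM ℝ (Lp ℝ 2 μ) y,
        ⟨y, Metric.ball_subset_closedBall hy, rfl⟩, rfl⟩
    have hclosure : closure ((toWeakSpaceCLM ℝ (Lp ℝ 1 μ)) ''
        ((I21.comp Q) '' Metric.ball 0 1)) ⊆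
        closure ((WeakSpace.map I21) ''
          ((toWeakSpaceCLM ℝ (Lp ℝ 2 μ)) '' Metric.closedBall 0 1)) :=
      closure_mono hsub
    exact hK.closure.of_isClosed_subset isClosed_closure hclosure
  · -- unimodular functions in the closure
    intro u hu
    have humem : MemLp (u : ℝ → ℝ) 2 μ := by
      refine MemLp.of_bound (Lp.aestronglyMeasurable u) 1 ?_
      filter_upwards [hu] with t ht
      simp [Real.norm_eq_abs, ht]
    set u₂ : Lp ℝ 2 μ := humem.toLp _ with hu₂def
    have hu₂coe : (u₂ : ℝ → ℝ) =ᵐ[μ] (u : ℝ → ℝ) := humem.coeFn_toLp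
    have hu₂norm : ‖u₂‖ ≤ 1 := by
      have hb : ∀ᵐ t ∂μ, ‖(u₂ : ℝ → ℝ) t‖ ≤ 1 := by
        filter_upwards [hu₂coe, hu] with t h1 h2
        simp [Real.norm_eq_abs, h1, h2]
      have hle := Lp.norm_le_of_ae_bound (f := u₂) zero_le_one hb
      have huniv : measureUnivNNReal μ = 1 := by
        simp [measureUnivNNReal, hμuniv]
      rwa [huniv, NNReal.coe_one, Real.one_rpow, one_mul] at hle
    have hIu : I21 u₂ = u := by
      apply Lp.ext
      exact (hI21 u₂).trans hu₂coe
    have hu₂cl : u₂ ∈ closure (Metric.ball (0 : Lp ℝ 2 μ) 1) := by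
      rw [closure_ball (0 : Lp ℝ 2 μ) one_ne_zero]
      simpa [Metric.mem_closedBall, dist_zero_right] using hu₂norm
    rw [himage]
    have hmem : I21 u₂ ∈ I21 '' closure (Metric.ball (0 : Lp ℝ 2 μ) 1) :=
      ⟨u₂, hu₂cl, rfl⟩
    have hsub := I21.continuous.continuousOn.image_closure
      (s := Metric.ball (0 : Lp ℝ 2 μ) 1)
    rw [← hIu]
    exact hsub hmem
end

section
/- Let {x_n} be a sequence in a Banach space X that is equivalent to the unit vector basis of ℓ^p (1 ≤ p < ∞), let Y be the closed linear span of {x_n}, let P : X → X be a bounded projection onto Y, and let S : X → X be a bounded operator with sup_n ‖x_n − S x_n‖ < ε where ε is small enough (depending on the equivalence constants). Then the operator P ∘ S restricted to Y, viewed via the basis equivalence as an operator on ℓ^p, is not compact. -/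
/-!
The lower `ℓ^p` estimate bounds the coordinate functionals of `(xₙ)` on its span by `1 / c`;
extended by Hahn–Banach they give functionals `gₙ` on `X` with `gₙ xₙ = 1`, `‖gₙ‖ ≤ 1 / c` and
`gₙ z → 0` for every `z ∈ Y`, since they vanish eventually on the span and are equicontinuous.
If `T = P ∘ S` were compact on `Y`, then along a subsequence `T xₙ → z ∈ Y`, so
`gₙ (xₙ - T xₙ) → 1`. But `xₙ - T xₙ = P (xₙ - S xₙ)` has norm at most `‖P‖ ε < c`.
-/

open Filter Topology

theorem le_rpow_sum_rpow_one_div {ι : Type*} {p : ℝ} (hp : 0 < p) {s : Finset ι} {f : ι → ℝ}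
    (hf : ∀ j ∈ s, 0 ≤ f j) {i : ι} (hi : i ∈ s) : f i ≤ (∑ j ∈ s, f j ^ p) ^ (1 / p) := by
  calc f i = (f i ^ p) ^ p⁻¹ := (Real.rpow_rpow_inv (hf i hi) hp.ne').symm
    _ ≤ (∑ j ∈ s, f j ^ p) ^ (1 / p) := by
      rw [one_div]
      gcongr
      · exact Real.rpow_nonneg (hf i hi) p
      · exact Finset.single_le_sum (fun j hj => Real.rpow_nonneg (hf j hj) p) hi

section Biorthogonal

variable {𝕜 ι X : Type*} [RCLike 𝕜] [NormedAddCommGroup X] [NormedSpace 𝕜 X] {x : ι → X} {c : ℝ}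

theorem linearIndependent_of_mul_norm_le_norm_sum (hc : 0 < c)
    (hx : ∀ (s : Finset ι) (a : ι → 𝕜), ∀ i ∈ s, c * ‖a i‖ ≤ ‖∑ j ∈ s, a j • x j‖) :
    LinearIndependent 𝕜 x := by
  rw [linearIndependent_iff']
  intro s a hsum i hi
  have h := hx s a i hi
  rw [hsum, norm_zero] at h
  exact norm_eq_zero.mp (le_antisymm (nonpos_of_mul_nonpos_right h hc) (norm_nonneg _))

theorem exists_biorthogonal_of_mul_norm_le_norm_sum (hc : 0 < c)
    (hx : ∀ (s : Finset ι) (a : ι → 𝕜), ∀ i ∈ s, c * ‖a i‖ ≤ ‖∑ j ∈ s, a j • x j‖) :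
    ∃ g : ι → StrongDual 𝕜 X,
      (∀ i, ‖g i‖ ≤ c⁻¹) ∧ (∀ i, g i (x i) = 1) ∧ ∀ i j, i ≠ j → g i (x j) = 0 := by
  let b := Module.Basis.span (linearIndependent_of_mul_norm_le_norm_sum hc hx)
  have hb : ∀ j, (b j : X) = x j := fun j => congrArg Subtype.val (Module.Basis.span_apply _ j)
  have hcoord : ∀ i (y : Submodule.span 𝕜 (Set.range x)), ‖b.coord i y‖ ≤ c⁻¹ * ‖y‖ := by
    intro i y
    rw [Module.Basis.coord_apply, le_inv_mul_iff₀ hc]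
    by_cases hi : i ∈ (b.repr y).support
    · have hy : ∑ j ∈ (b.repr y).support, b.repr y j • x j = (y : X) := by
        conv_rhs => rw [← b.linearCombination_repr y]
        simp [Finsupp.linearCombination_apply, Finsupp.sum, hb]
      simpa [hy] using hx _ (b.repr y) i hi
    · rw [Finsupp.notMem_support_iff.mp hi, norm_zero, mul_zero]
      exact norm_nonneg _
  have hext : ∀ i, ∃ g : StrongDual 𝕜 X, (∀ j, g (x j) = b.repr (b j) i) ∧ ‖g‖ ≤ c⁻¹ := by
    intro i
    obtain ⟨g, hg, hgnorm⟩ := exists_extension_norm_eq _ ((b.coord i).mkContinuous c⁻¹ (hcoord i))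
    refine ⟨g, fun j => ?_, hgnorm ▸ LinearMap.mkContinuous_norm_le _ (inv_nonneg.mpr hc.le) _⟩
    simpa [hb] using hg (b j)
  choose g hgx hg using hext
  refine ⟨g, hg, fun i => by simp [hgx], fun i j hij => by simp [hgx, hij.symm]⟩

theorem tendsto_cofinite_apply_zero_of_mem_topologicalClosure_span {g : ι → StrongDual 𝕜 X} {K : ℝ}
    (hg : ∀ i, ‖g i‖ ≤ K) (hgx : ∀ i j, i ≠ j → g i (x j) = 0) {z : X}
    (hz : z ∈ (Submodule.span 𝕜 (Set.range x)).topologicalClosure) :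
    Tendsto (fun i => g i z) cofinite (𝓝 0) := by
  let V : Submodule 𝕜 X :=
    { carrier := {z | Tendsto (fun i => g i z) cofinite (𝓝 0)}
      add_mem' := fun hu hv => by simpa using hu.add hv
      zero_mem' := by simpa using tendsto_const_nhds
      smul_mem' := fun a u hu => by simpa using hu.const_mul a }
  have hequi : Equicontinuous fun i => ⇑(g i) :=
    ((NormedSpace.equicontinuous_TFAE g).out 5 1).mp (show ∃ K, ∀ i, ‖g i‖ ≤ K from ⟨K, hg⟩)
  have hV : IsClosed (V : Set X) := hequi.isClosed_setOfPred_tendsto continuous_const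
  have hspan : Submodule.span 𝕜 (Set.range x) ≤ V := by
    rw [Submodule.span_le]
    rintro _ ⟨j, rfl⟩
    exact tendsto_const_nhds.congr' ((eventually_cofinite_ne j).mono fun i hi => (hgx i j hi).symm)
  exact Submodule.topologicalClosure_minimal _ hspan hV hz

theorem tendsto_apply_apply_zero_of_norm_le {α : Type*} {l : Filter α} {h : α → StrongDual 𝕜 X}
    {w : α → X} {z : X} {K : ℝ} (hh : ∀ a, ‖h a‖ ≤ K) (hw : Tendsto w l (𝓝 z))
    (hz : Tendsto (fun a => h a z) l (𝓝 0)) :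
    Tendsto (fun a => h a (w a)) l (𝓝 0) := by
  have hdiff : Tendsto (fun a => h a (w a - z)) l (𝓝 0) :=
    squeeze_zero_norm (fun a => (h a).le_of_opNorm_le (hh a) _)
      (by simpa using (tendsto_iff_norm_sub_tendsto_zero.mp hw).const_mul K)
  simpa using hdiff.add hz

end Biorthogonal

theorem IsCompactOperator.exists_tendsto_comp_subseq {𝕜 E F : Type*} [NontriviallyNormedField 𝕜]
    [SeminormedAddCommGroup E] [NormedSpace 𝕜 E] [SeminormedAddCommGroup F] [NormedSpace 𝕜 F]
    {T : E →L[𝕜] F} (hT : IsCompactOperator T) {u : ℕ → E} {R : ℝ} (hu : ∀ n, ‖u n‖ ≤ R) :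
    ∃ z, ∃ φ : ℕ → ℕ, StrictMono φ ∧ Tendsto (T ∘ u ∘ φ) atTop (𝓝 z) := by
  obtain ⟨K, hK, hTK⟩ := hT.image_closedBall_subset_compact (f := T.toLinearMap) R
  obtain ⟨z, -, φ, hφ, hlim⟩ :=
    hK.tendsto_subseq fun n => hTK ⟨u n, mem_closedBall_zero_iff.mpr (hu n), rfl⟩
  exact ⟨z, φ, hφ, hlim⟩

theorem perturbation_not_compact_general
    (X : Type*) [NormedAddCommGroup X] [NormedSpace ℝ X]
    (p : ℝ) (hp : 1 ≤ p) (x : ℕ → X) (c C : ℝ) (hc : 0 < c)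
    (hequiv : ∀ (s : Finset ℕ) (a : ℕ → ℝ),
      c * (∑ i ∈ s, |a i| ^ p) ^ (1 / p) ≤ ‖∑ i ∈ s, a i • x i‖ ∧
      ‖∑ i ∈ s, a i • x i‖ ≤ C * (∑ i ∈ s, |a i| ^ p) ^ (1 / p))
    (Y : Submodule ℝ X) (hY : Y = (Submodule.span ℝ (Set.range x)).topologicalClosure)
    (P : X →L[ℝ] X) (hPY : ∀ z, P z ∈ Y) (hPid : ∀ y ∈ Y, P y = y)
    (S : X →L[ℝ] X) (ε : ℝ) (hε : ε < c / ‖P‖)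
    (hS : ∀ n, ‖x n - S (x n)‖ ≤ ε) :
    ¬ IsCompactOperator ((P.comp S).comp Y.subtypeL) := by
  intro hcomp
  have hxY : ∀ n, x n ∈ Y := fun n =>
    hY ▸ Submodule.le_topologicalClosure _ (Submodule.subset_span ⟨n, rfl⟩)
  have hlower : ∀ (s : Finset ℕ) (a : ℕ → ℝ), ∀ i ∈ s, c * ‖a i‖ ≤ ‖∑ j ∈ s, a j • x j‖ :=
    fun s a i hi => (mul_le_mul_of_nonneg_left (le_rpow_sum_rpow_one_div (by linarith)
      (fun j _ => abs_nonneg (a j)) hi) hc.le).trans (hequiv s a).1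
  obtain ⟨g, hg, hg_self, hg_ne⟩ := exists_biorthogonal_of_mul_norm_le_norm_sum hc hlower
  obtain ⟨z, φ, hφ, hTz⟩ := hcomp.exists_tendsto_comp_subseq (u := fun n => ⟨x n, hxY n⟩)
    (R := C) fun n => by simpa using (hequiv {n} fun _ => 1).2
  have hzY : z ∈ Y := (hY ▸ Submodule.isClosed_topologicalClosure _).mem_of_tendsto hTz
    (.of_forall fun k => hPY _)
  have hgz : Tendsto (fun k => g (φ k) z) atTop (𝓝 0) :=
    (tendsto_cofinite_apply_zero_of_mem_topologicalClosure_span hg hg_ne (hY ▸ hzY)).comp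
      (Nat.cofinite_eq_atTop ▸ hφ.tendsto_atTop)
  have hlim : Tendsto (fun k => g (φ k) (P (x (φ k) - S (x (φ k))))) atTop (𝓝 1) := by
    simpa [hPid _ (hxY _), hg_self] using
      (tendsto_apply_apply_zero_of_norm_le (fun k => hg (φ k)) hTz hgz).const_sub 1
  have hsmall : ∀ n, ‖g n (P (x n - S (x n)))‖ ≤ c⁻¹ * (‖P‖ * ε) := fun n =>
    ((g n).le_of_opNorm_le (hg n) _).trans (mul_le_mul_of_nonneg_left
      (P.le_of_opNorm_le_of_le le_rfl (hS n)) (inv_nonneg.mpr hc.le))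
  have hPε : c⁻¹ * (‖P‖ * ε) < 1 := by
    rw [inv_mul_lt_one₀ hc]
    rcases (norm_nonneg P).eq_or_lt with hP | hP
    · simpa [← hP] using hc
    · exact (lt_div_iff₀' hP).mp hε
  exact hPε.not_ge (by simpa using le_of_tendsto' hlim.norm fun k => hsmall (φ k))

/-- If `(xₙ)` is equivalent to the unit vector basis of `ℓ^p`, `Y` its closed
span, `P` a bounded projection onto `Y`, and `S` satisfies `supₙ ‖xₙ − S xₙ‖ ≤ ε` with
`ε < c/‖P‖`, then `P ∘ S` restricted to `Y` is not a compact operator. -/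
theorem perturbation_not_compact
    (X : Type*) [NormedAddCommGroup X] [NormedSpace ℝ X] [CompleteSpace X]
    (p : ℝ) (hp : 1 ≤ p) (x : ℕ → X) (c C : ℝ) (hc : 0 < c) (hC : 0 < C)
    (hequiv : ∀ (s : Finset ℕ) (a : ℕ → ℝ),
      c * (∑ i ∈ s, |a i| ^ p) ^ (1 / p) ≤ ‖∑ i ∈ s, a i • x i‖ ∧
      ‖∑ i ∈ s, a i • x i‖ ≤ C * (∑ i ∈ s, |a i| ^ p) ^ (1 / p))
    (Y : Submodule ℝ X) (hY : Y = (Submodule.span ℝ (Set.range x)).topologicalClosure)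
    (P : X →L[ℝ] X) (hPY : ∀ z, P z ∈ Y) (hPid : ∀ y ∈ Y, P y = y)
    (S : X →L[ℝ] X) (ε : ℝ) (hε : ε < c / ‖P‖)
    (hS : ∀ n, ‖x n - S (x n)‖ ≤ ε) :
    ¬ IsCompactOperator ((P.comp S).comp Y.subtypeL) :=
  perturbation_not_compact_general X p hp x c C hc hequiv Y hY P hPY hPid S ε hε hS
end

section
/- There is a universal constant C such that for all finitely supported coefficient sequences (a_{n,i}) (n ≥ 0, 1 ≤ i ≤ 2^n), Σ_{n=0}^∞ (Σ_{i=1}^{2^n} a_{n,i}²)^{1/2} ≤ C · ‖(Σ_{n,i} a_{n,i}² h_{n,i}² / ‖h_{n,i}‖_{L¹}²)^{1/2}‖_{L¹}. -/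
/-- The Haar function `h_{n,i}` on `(0,1)`: `1` on `[(i−1)/2^n, (2i−1)/2^{n+1})`,
`−1` on `[(2i−1)/2^{n+1}, i/2^n)`, `0` elsewhere. -/
noncomputable def haar (n i : ℕ) : ℝ → ℝ := fun t =>
  if ((i:ℝ) - 1) / 2 ^ n ≤ t ∧ t < (2 * (i:ℝ) - 1) / 2 ^ (n + 1) then 1
  else if (2 * (i:ℝ) - 1) / 2 ^ (n + 1) ≤ t ∧ t < (i:ℝ) / 2 ^ n then -1
  else 0

/-! Write `xₙ = (∑_q c n q²)^{1/2}` and `dₙ,q = c n q / xₙ`, so that `∑ₙ xₙ = ∑ c n q dₙ,q` is the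
pairing of `f = ∑ c n q hₙ,q₊₁ / ‖hₙ,q₊₁‖₁` with `g = ∑ dₙ,q hₙ,q₊₁`, where `∑_q dₙ,q² ≤ 1`.
Sampled on the `2^N` dyadic intervals of level `N`, the pairing is bounded pointwise, by
Cauchy–Schwarz, through the increments of the partial square functions `Sₙ` of `f`; what is left,
`∑ₙ Sₙ₊₁ dₙ²`, is controlled by a Carleson (BMO) estimate: on a dyadic interval of level `m` the tail
`∑_{n ≥ m} dₙ²` has average at most `2`. Altogether `∑ₙ xₙ ≤ 2 ‖S f‖₁`. -/

open Finset MeasureTheory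

namespace DyadicH1

noncomputable def squareFn (u : ℕ → ℝ) (n : ℕ) : ℝ := √(∑ m ∈ range n, u m ^ 2)

section SquareFn

variable (u : ℕ → ℝ)

lemma squareFn_nonneg (n : ℕ) : 0 ≤ squareFn u n := Real.sqrt_nonneg _

lemma sq_squareFn (n : ℕ) : squareFn u n ^ 2 = ∑ m ∈ range n, u m ^ 2 :=
  Real.sq_sqrt (sum_nonneg fun _ _ => sq_nonneg _)

@[simp] lemma squareFn_zero : squareFn u 0 = 0 := by simp [squareFn]

lemma squareFn_mono : Monotone (squareFn u) :=
  monotone_nat_of_le_succ fun n => Real.sqrt_le_sqrt <| by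
    rw [sum_range_succ]; exact le_add_of_nonneg_right (sq_nonneg _)

lemma squareFn_congr {w : ℕ → ℝ} {n : ℕ} (h : ∀ k < n, u k = w k) :
    squareFn u n = squareFn w n := by
  unfold squareFn
  rw [sum_congr rfl fun k hk => by rw [h k (mem_range.mp hk)]]

lemma sum_squareFn_sub (n : ℕ) :
    ∑ m ∈ range n, (squareFn u (m + 1) - squareFn u m) = squareFn u n := by
  rw [sum_range_sub, squareFn_zero, sub_zero]

lemma sq_le_squareFn_sub_mul (n : ℕ) :
    u n ^ 2 ≤ (squareFn u (n + 1) - squareFn u n) * (2 * squareFn u (n + 1)) := by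
  have hsq : u n ^ 2 = squareFn u (n + 1) ^ 2 - squareFn u n ^ 2 := by
    rw [sq_squareFn, sq_squareFn, sum_range_succ, add_sub_cancel_left]
  have := squareFn_mono u n.le_succ
  nlinarith [squareFn_nonneg u n]

/-- Pointwise form of the `H¹`–`BMO` pairing: `u n² ≤ ΔSₙ · 2Sₙ₊₁` and Cauchy–Schwarz. -/
lemma sum_mul_le_sqrt_squareFn_mul (v : ℕ → ℝ) (N : ℕ) :
    ∑ n ∈ range N, u n * v n ≤
      √(squareFn u N) * √(2 * ∑ n ∈ range N, squareFn u (n + 1) * v n ^ 2) := by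
  have hΔ : ∀ n, 0 ≤ squareFn u (n + 1) - squareFn u n :=
    fun n => sub_nonneg.mpr (squareFn_mono u n.le_succ)
  calc ∑ n ∈ range N, u n * v n
      ≤ ∑ n ∈ range N, √(squareFn u (n + 1) - squareFn u n) *
          √(2 * squareFn u (n + 1) * v n ^ 2) := by
        refine sum_le_sum fun n _ => ?_
        rw [← Real.sqrt_mul (hΔ n)]
        refine Real.le_sqrt_of_sq_le ?_
        rw [mul_pow, ← mul_assoc]
        exact mul_le_mul_of_nonneg_right (sq_le_squareFn_sub_mul u n) (sq_nonneg _)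
    _ ≤ √(∑ n ∈ range N, (squareFn u (n + 1) - squareFn u n)) *
          √(∑ n ∈ range N, 2 * squareFn u (n + 1) * v n ^ 2) :=
        Real.sum_sqrt_mul_sqrt_le _ hΔ fun n => by
          have := squareFn_nonneg u (n + 1); positivity
    _ = _ := by simp_rw [sum_squareFn_sub, mul_assoc, ← mul_sum]

end SquareFn

lemma sum_succ_mul_eq_sum_sub_mul_tail (f w : ℕ → ℝ) (hf : f 0 = 0) (N : ℕ) :
    ∑ n ∈ range N, f (n + 1) * w n =
      ∑ m ∈ range N, (f (m + 1) - f m) * ∑ n ∈ Ico m N, w n := by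
  induction N with
  | zero => simp
  | succ N ih =>
    have htail : ∀ m ∈ range N, ∑ n ∈ Ico m (N + 1), w n = ∑ n ∈ Ico m N, w n + w N :=
      fun m hm => sum_Ico_succ_top (mem_range.mp hm).le w
    rw [sum_range_succ, ih, sum_range_succ _ N, Nat.Ico_succ_singleton, sum_singleton]
    conv_rhs => rw [sum_congr rfl fun m hm => by rw [htail m hm]]
    simp only [mul_add, sum_add_distrib, ← sum_mul, sum_range_sub, hf]
    ring

lemma sum_range_mul_eq_sum_sum {M : Type*} [AddCommMonoid M] (f : ℕ → M) (K L : ℕ) :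
    ∑ j ∈ range (K * L), f j = ∑ q ∈ range K, ∑ r ∈ range L, f (L * q + r) := by
  induction K with
  | zero => simp
  | succ K ih => rw [Nat.succ_mul, sum_range_add, ih, sum_range_succ, mul_comm K L]

lemma mul_add_div_of_lt {L q r : ℕ} (hr : r < L) : (L * q + r) / L = q := by
  rw [Nat.mul_add_div (pos_of_gt hr), Nat.div_eq_of_lt hr, add_zero]

lemma sum_range_mul_comp_div {M : Type*} [AddCommMonoid M] (f : ℕ → M) (K L : ℕ) :
    ∑ j ∈ range (K * L), f (j / L) = L • ∑ q ∈ range K, f q := by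
  rw [sum_range_mul_eq_sum_sum, smul_sum]
  refine sum_congr rfl fun q _ => ?_
  rw [sum_congr rfl fun r hr => by rw [mul_add_div_of_lt (mem_range.mp hr)], sum_const,
    card_range]

lemma sum_mul_le_of_sum_block_le {K L : ℕ} {C : ℝ} (F g : ℕ → ℝ) (hF : ∀ q < K, 0 ≤ F q)
    (hg : ∀ q < K, ∑ r ∈ range L, g (L * q + r) ≤ C * L) :
    ∑ j ∈ range (K * L), F (j / L) * g j ≤ C * ∑ j ∈ range (K * L), F (j / L) := by
  rw [sum_range_mul_comp_div, sum_range_mul_eq_sum_sum, nsmul_eq_mul, mul_sum, mul_sum]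
  refine sum_le_sum fun q hq => ?_
  have hq := mem_range.mp hq
  calc ∑ r ∈ range L, F ((L * q + r) / L) * g (L * q + r)
      = F q * ∑ r ∈ range L, g (L * q + r) := by
        rw [mul_sum]
        exact sum_congr rfl fun r hr => by rw [mul_add_div_of_lt (mem_range.mp hr)]
    _ ≤ F q * (C * L) := mul_le_mul_of_nonneg_left (hg q hq) (hF q hq)
    _ = C * (L * F q) := by ring

lemma sum_Ico_two_pow_sub_le (m N : ℕ) : ∑ n ∈ Ico m N, (2 : ℝ) ^ (N - n) ≤ 2 * 2 ^ (N - m) := by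
  calc ∑ n ∈ Ico m N, (2 : ℝ) ^ (N - n)
      = 2 ^ (N - m) * ∑ k ∈ range (N - m), (1 / (2 : ℝ)) ^ k := by
        rw [sum_Ico_eq_sum_range, mul_sum]
        refine sum_congr rfl fun k hk => ?_
        rw [show N - m = N - (m + k) + k by have := mem_range.mp hk; omega, pow_add,
          one_div_pow, mul_assoc, mul_one_div_cancel (by positivity), mul_one]
    _ ≤ 2 ^ (N - m) * 2 := mul_le_mul_of_nonneg_left (sum_geometric_two_le _) (by positivity)
    _ = 2 * 2 ^ (N - m) := mul_comm _ _

lemma sum_Icc_one_eq_sum_range {M : Type*} [AddCommMonoid M] (f : ℕ → M) (K : ℕ) :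
    ∑ i ∈ Icc 1 K, f i = ∑ q ∈ range K, f (q + 1) := by
  rw [range_eq_Ico, sum_Ico_add', zero_add, Ico_add_one_right_eq_Icc]

/-- The index (from `0`) of the level-`n` dyadic interval containing the `j`-th interval of
level `N`, for `n ≤ N`. -/
def cell (N n j : ℕ) : ℕ := j / 2 ^ (N - n)

lemma two_pow_sub_mul_two_pow_sub {n m N : ℕ} (hnm : n ≤ m) (hmN : m ≤ N) :
    2 ^ (m - n) * 2 ^ (N - m) = 2 ^ (N - n) := by
  rw [← pow_add]; congr 1; omega

lemma cell_cell {n m N : ℕ} (hnm : n ≤ m) (hmN : m ≤ N) (j : ℕ) :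
    cell m n (cell N m j) = cell N n j := by
  rw [cell, cell, cell, Nat.div_div_eq_div_mul, mul_comm, two_pow_sub_mul_two_pow_sub hnm hmN]

lemma cell_lt {n N j : ℕ} (hn : n ≤ N) (hj : j < 2 ^ N) : cell N n j < 2 ^ n := by
  rw [cell, Nat.div_lt_iff_lt_mul (by positivity), ← pow_add, Nat.add_sub_cancel' hn]
  exact hj

lemma sum_range_comp_cell {M : Type*} [AddCommMonoid M] (f : ℕ → M) {n N : ℕ} (hn : n ≤ N) :
    ∑ j ∈ range (2 ^ N), f (cell N n j) = 2 ^ (N - n) • ∑ q ∈ range (2 ^ n), f q := by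
  rw [← sum_range_mul_comp_div, ← pow_add, Nat.add_sub_cancel' hn]
  rfl

lemma sum_block_comp_cell {M : Type*} [AddCommMonoid M] (f : ℕ → M) {m n N : ℕ} (hmn : m ≤ n)
    (hnN : n ≤ N) (q : ℕ) :
    ∑ r ∈ range (2 ^ (N - m)), f (cell N n (2 ^ (N - m) * q + r)) =
      2 ^ (N - n) • ∑ s ∈ range (2 ^ (n - m)), f (2 ^ (n - m) * q + s) := by
  rw [← sum_range_mul_comp_div, ← two_pow_sub_mul_two_pow_sub hmn hnN]
  refine sum_congr rfl fun r _ => ?_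
  rw [cell, mul_comm (2 ^ (n - m)), mul_assoc, Nat.mul_add_div (by positivity)]

lemma Ico_subset_Ico_cell {n N : ℕ} (hn : n ≤ N) (j : ℕ) :
    Set.Ico ((j : ℝ) / 2 ^ N) ((j + 1) / 2 ^ N) ⊆
      Set.Ico ((cell N n j : ℝ) / 2 ^ n) ((cell N n j + 1) / 2 ^ n) := by
  have hN : (2 : ℝ) ^ N = 2 ^ (N - n) * 2 ^ n := by
    rw [← pow_add, Nat.sub_add_cancel hn]
  have hlo : (cell N n j : ℝ) * 2 ^ (N - n) ≤ j := by
    exact_mod_cast Nat.div_mul_le_self j _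
  have hhi : (j : ℝ) + 1 ≤ (cell N n j + 1) * 2 ^ (N - n) := by
    have := Nat.lt_mul_div_succ j (by positivity : 0 < 2 ^ (N - n))
    rw [mul_comm] at this
    exact_mod_cast this
  rw [hN, ← div_div, ← div_div]
  apply Set.Ico_subset_Ico
  · gcongr
    rwa [le_div_iff₀ (by positivity)]
  · gcongr
    rwa [div_le_iff₀ (by positivity)]

section Coefficients

variable (c : ℕ → ℕ → ℝ)

noncomputable def levelNorm (n : ℕ) : ℝ := √(∑ q ∈ range (2 ^ n), c n q ^ 2)

/-- The coefficients of the `BMO` function paired against `∑ c n q hₙ,q₊₁ / ‖hₙ,q₊₁‖₁`;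
division by `levelNorm c n = 0` gives `0`. -/
noncomputable def dualCoeff (n q : ℕ) : ℝ := c n q / levelNorm c n

/-- `|2ⁿ c n q hₙ,q₊₁|` on the `j`-th dyadic interval of level `N`. -/
noncomputable def haarTerm (N j n : ℕ) : ℝ := 2 ^ n * |c n (cell N n j)|

lemma sum_sq_eq_sq_levelNorm (n : ℕ) : ∑ q ∈ range (2 ^ n), c n q ^ 2 = levelNorm c n ^ 2 :=
  (Real.sq_sqrt (sum_nonneg fun _ _ => sq_nonneg _)).symm

lemma sum_dualCoeff_sq_le_one (n : ℕ) : ∑ q ∈ range (2 ^ n), dualCoeff c n q ^ 2 ≤ 1 := by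
  simp_rw [dualCoeff, div_pow, ← sum_div, sum_sq_eq_sq_levelNorm]
  exact div_self_le_one _

lemma sum_abs_mul_abs_dualCoeff (n : ℕ) :
    ∑ q ∈ range (2 ^ n), |c n q| * |dualCoeff c n q| = levelNorm c n := by
  have hx : 0 ≤ levelNorm c n := Real.sqrt_nonneg _
  simp_rw [dualCoeff, abs_div, abs_of_nonneg hx, ← mul_div_assoc, abs_mul_abs_self, ← sq,
    ← sum_div, sum_sq_eq_sq_levelNorm, sq, mul_self_div_self]

lemma sum_block_dualCoeff_sq_le {m n N q : ℕ} (hmn : m ≤ n) (hnN : n ≤ N) (hq : q < 2 ^ m) :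
    ∑ r ∈ range (2 ^ (N - m)), dualCoeff c n (cell N n (2 ^ (N - m) * q + r)) ^ 2 ≤
      2 ^ (N - n) := by
  rw [sum_block_comp_cell (fun i => dualCoeff c n i ^ 2) hmn hnN, nsmul_eq_mul, Nat.cast_pow,
    Nat.cast_ofNat]
  refine mul_le_of_le_one_right (by positivity) ((single_le_sum (f := fun q' =>
    ∑ s ∈ range (2 ^ (n - m)), dualCoeff c n (2 ^ (n - m) * q' + s) ^ 2)
    (fun _ _ => sum_nonneg fun _ _ => sq_nonneg _) (mem_range.mpr hq)).trans ?_)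
  rw [← sum_range_mul_eq_sum_sum (fun i => dualCoeff c n i ^ 2), ← pow_add,
    Nat.add_sub_cancel' hmn]
  exact sum_dualCoeff_sq_le_one c n

lemma sum_block_sum_Ico_dualCoeff_sq_le {m N q : ℕ} (hq : q < 2 ^ m) :
    ∑ r ∈ range (2 ^ (N - m)), ∑ n ∈ Ico m N, dualCoeff c n (cell N n (2 ^ (N - m) * q + r)) ^ 2
      ≤ 2 * 2 ^ (N - m) := by
  rw [sum_comm]
  calc _ ≤ ∑ n ∈ Ico m N, (2 : ℝ) ^ (N - n) := sum_le_sum fun n hn =>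
        sum_block_dualCoeff_sq_le c (mem_Ico.mp hn).1 (mem_Ico.mp hn).2.le hq
    _ ≤ 2 * 2 ^ (N - m) := sum_Ico_two_pow_sub_le m N

lemma squareFn_haarTerm_eq_of_le {k m N : ℕ} (hk : k ≤ m + 1) (hmN : m ≤ N) (j : ℕ) :
    squareFn (haarTerm c N j) k = squareFn (haarTerm c m (cell N m j)) k :=
  squareFn_congr _ fun i hi => by
    rw [haarTerm, haarTerm, cell_cell (by omega) hmN]

/-- The increment `Sₘ₊₁ - Sₘ` is constant on the dyadic intervals of level `m`, on each of which
the tail `∑_{m ≤ n < N} dualCoeff²` has average at most `2`. -/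
lemma sum_squareFn_sub_mul_sum_Ico_dualCoeff_sq_le {m N : ℕ} (hm : m < N) :
    ∑ j ∈ range (2 ^ N), (squareFn (haarTerm c N j) (m + 1) - squareFn (haarTerm c N j) m) *
        ∑ n ∈ Ico m N, dualCoeff c n (cell N n j) ^ 2
      ≤ 2 * ∑ j ∈ range (2 ^ N),
        (squareFn (haarTerm c N j) (m + 1) - squareFn (haarTerm c N j) m) := by
  have hcell : ∀ j, squareFn (haarTerm c N j) (m + 1) - squareFn (haarTerm c N j) m =
      squareFn (haarTerm c m (j / 2 ^ (N - m))) (m + 1) -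
        squareFn (haarTerm c m (j / 2 ^ (N - m))) m := fun j => by
    rw [squareFn_haarTerm_eq_of_le c le_rfl hm.le, squareFn_haarTerm_eq_of_le c m.le_succ hm.le,
      cell]
  simp_rw [hcell]
  rw [show 2 ^ N = 2 ^ m * 2 ^ (N - m) by rw [← pow_add, Nat.add_sub_cancel' hm.le]]
  refine sum_mul_le_of_sum_block_le _ _
    (fun q _ => sub_nonneg.mpr (squareFn_mono _ m.le_succ)) fun q hq => ?_
  push_cast
  exact sum_block_sum_Ico_dualCoeff_sq_le c hq

lemma sum_sum_squareFn_mul_dualCoeff_sq_le (N : ℕ) :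
    ∑ j ∈ range (2 ^ N), ∑ n ∈ range N,
        squareFn (haarTerm c N j) (n + 1) * dualCoeff c n (cell N n j) ^ 2
      ≤ 2 * ∑ j ∈ range (2 ^ N), squareFn (haarTerm c N j) N := by
  calc ∑ j ∈ range (2 ^ N), ∑ n ∈ range N,
        squareFn (haarTerm c N j) (n + 1) * dualCoeff c n (cell N n j) ^ 2
      = ∑ m ∈ range N, ∑ j ∈ range (2 ^ N),
          (squareFn (haarTerm c N j) (m + 1) - squareFn (haarTerm c N j) m) *
            ∑ n ∈ Ico m N, dualCoeff c n (cell N n j) ^ 2 := by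
        simp_rw [sum_succ_mul_eq_sum_sub_mul_tail _ _ (squareFn_zero _)]
        exact sum_comm
    _ ≤ ∑ m ∈ range N, 2 * ∑ j ∈ range (2 ^ N),
          (squareFn (haarTerm c N j) (m + 1) - squareFn (haarTerm c N j) m) :=
        sum_le_sum fun m hm =>
          sum_squareFn_sub_mul_sum_Ico_dualCoeff_sq_le c (mem_range.mp hm)
    _ = 2 * ∑ j ∈ range (2 ^ N), squareFn (haarTerm c N j) N := by
        rw [← mul_sum, sum_comm]
        simp_rw [sum_squareFn_sub]

lemma sum_sum_haarTerm_mul_abs_dualCoeff (N : ℕ) :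
    ∑ j ∈ range (2 ^ N), ∑ n ∈ range N, haarTerm c N j n * |dualCoeff c n (cell N n j)| =
      2 ^ N * ∑ n ∈ range N, levelNorm c n := by
  rw [sum_comm, mul_sum]
  refine sum_congr rfl fun n hn => ?_
  have hnN := (mem_range.mp hn).le
  simp_rw [haarTerm, mul_assoc, ← mul_sum]
  rw [sum_range_comp_cell (fun q => |c n q| * |dualCoeff c n q|) hnN, sum_abs_mul_abs_dualCoeff,
    nsmul_eq_mul, ← mul_assoc]
  push_cast
  rw [← pow_add, Nat.add_sub_cancel' hnN]

lemma two_pow_mul_sum_levelNorm_le (N : ℕ) :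
    2 ^ N * ∑ n ∈ range N, levelNorm c n ≤
      2 * ∑ j ∈ range (2 ^ N), squareFn (haarTerm c N j) N := by
  set A := ∑ j ∈ range (2 ^ N), squareFn (haarTerm c N j) N
  have hA : 0 ≤ A := sum_nonneg fun j _ => squareFn_nonneg _ _
  calc 2 ^ N * ∑ n ∈ range N, levelNorm c n
      = ∑ j ∈ range (2 ^ N), ∑ n ∈ range N, haarTerm c N j n * |dualCoeff c n (cell N n j)| :=
        (sum_sum_haarTerm_mul_abs_dualCoeff c N).symm
    _ ≤ ∑ j ∈ range (2 ^ N), √(squareFn (haarTerm c N j) N) * √(2 * ∑ n ∈ range N,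
          squareFn (haarTerm c N j) (n + 1) * |dualCoeff c n (cell N n j)| ^ 2) :=
        sum_le_sum fun j _ => sum_mul_le_sqrt_squareFn_mul _ _ N
    _ ≤ √A * √(∑ j ∈ range (2 ^ N), 2 * ∑ n ∈ range N,
          squareFn (haarTerm c N j) (n + 1) * |dualCoeff c n (cell N n j)| ^ 2) :=
        Real.sum_sqrt_mul_sqrt_le _ (fun j => squareFn_nonneg _ _) fun j =>
          mul_nonneg zero_le_two (sum_nonneg fun n _ =>
            mul_nonneg (squareFn_nonneg _ _) (sq_nonneg _))
    _ ≤ √A * √(2 ^ 2 * A) := by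
        simp_rw [sq_abs, ← mul_sum]
        refine mul_le_mul_of_nonneg_left (Real.sqrt_le_sqrt ?_) (Real.sqrt_nonneg _)
        linarith [sum_sum_squareFn_mul_dualCoeff_sq_le c N]
    _ = 2 * A := by
        rw [Real.sqrt_mul (by positivity), Real.sqrt_sq zero_le_two, mul_left_comm,
          Real.mul_self_sqrt hA]

end Coefficients

lemma measurable_haar (n i : ℕ) : Measurable (haar n i) :=
  Measurable.ite measurableSet_Ico measurable_const
    (Measurable.ite measurableSet_Ico measurable_const measurable_const)

lemma haar_sq_le_one (n i : ℕ) (t : ℝ) : haar n i t ^ 2 ≤ 1 := by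
  unfold haar
  split_ifs <;> norm_num

lemma haar_succ_sq_eq_one {n q : ℕ} {t : ℝ}
    (ht : t ∈ Set.Ico ((q : ℝ) / 2 ^ n) ((q + 1) / 2 ^ n)) : haar n (q + 1) t ^ 2 = 1 := by
  obtain ⟨hlo, hhi⟩ := ht
  unfold haar
  push_cast
  rw [add_sub_cancel_right]
  by_cases hmid : t < (2 * ((q : ℝ) + 1) - 1) / 2 ^ (n + 1)
  · rw [if_pos ⟨hlo, hmid⟩]; norm_num
  · rw [if_neg fun h => hmid h.2, if_pos ⟨not_lt.mp hmid, hhi⟩]; norm_num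

section SquareFunction

variable (c : ℕ → ℕ → ℝ) (N : ℕ)

noncomputable def haarSquareFn (t : ℝ) : ℝ :=
  √(∑ n ∈ range N, ∑ q ∈ range (2 ^ n), c n q ^ 2 * haar n (q + 1) t ^ 2 * ((2 : ℝ) ^ n) ^ 2)

lemma measurable_haarSquareFn : Measurable (haarSquareFn c N) :=
  (Finset.measurable_sum _ fun n _ => Finset.measurable_sum _ fun q _ =>
    (((measurable_haar n (q + 1)).pow_const 2).const_mul _).mul_const _).sqrt

lemma haarSquareFn_le (t : ℝ) :
    haarSquareFn c N t ≤ √(∑ n ∈ range N, ∑ q ∈ range (2 ^ n), c n q ^ 2 * ((2 : ℝ) ^ n) ^ 2) :=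
  Real.sqrt_le_sqrt <| sum_le_sum fun n _ => sum_le_sum fun q _ => by
    have := haar_sq_le_one n (q + 1) t
    nlinarith [sq_nonneg (c n q * 2 ^ n)]

lemma intervalIntegrable_haarSquareFn (a b : ℝ) :
    IntervalIntegrable (haarSquareFn c N) volume a b :=
  intervalIntegrable_const.mono_fun' (measurable_haarSquareFn c N).aestronglyMeasurable
    (Filter.Eventually.of_forall fun t =>
      (Real.norm_of_nonneg (Real.sqrt_nonneg _)).trans_le (haarSquareFn_le c N t))

lemma squareFn_haarTerm_le_haarSquareFn {j : ℕ} (hj : j < 2 ^ N) {t : ℝ}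
    (ht : t ∈ Set.Ico ((j : ℝ) / 2 ^ N) ((j + 1) / 2 ^ N)) :
    squareFn (haarTerm c N j) N ≤ haarSquareFn c N t := by
  refine Real.sqrt_le_sqrt (sum_le_sum fun n hn => ?_)
  have hnN := (mem_range.mp hn).le
  have hterm : haarTerm c N j n ^ 2 =
      c n (cell N n j) ^ 2 * haar n (cell N n j + 1) t ^ 2 * ((2 : ℝ) ^ n) ^ 2 := by
    rw [haarTerm, haar_succ_sq_eq_one (Ico_subset_Ico_cell hnN j ht), mul_pow, sq_abs]
    ring
  rw [hterm]
  exact single_le_sum (f := fun q => c n q ^ 2 * haar n (q + 1) t ^ 2 * ((2 : ℝ) ^ n) ^ 2)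
    (fun q _ => by positivity) (mem_range.mpr (cell_lt hnN hj))

lemma sum_squareFn_haarTerm_le_integral :
    ∑ j ∈ range (2 ^ N), squareFn (haarTerm c N j) N ≤
      2 ^ N * ∫ t in Set.Ioo (0 : ℝ) 1, haarSquareFn c N t := by
  set p : ℕ → ℝ := fun k => k / 2 ^ N
  have hpiece : ∀ j < 2 ^ N,
      squareFn (haarTerm c N j) N ≤ 2 ^ N * ∫ t in p j..p (j + 1), haarSquareFn c N t := by
    intro j hj
    have hp : p j ≤ p (j + 1) := by simp only [p]; gcongr; exact_mod_cast j.le_succ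
    have hmono := intervalIntegral.integral_mono_on_of_le_Ioo hp intervalIntegrable_const
      (intervalIntegrable_haarSquareFn c N _ _) fun t ht =>
        squareFn_haarTerm_le_haarSquareFn c N hj (t := t) (by
          simpa [p] using Set.Ioo_subset_Ico_self ht)
    rw [intervalIntegral.integral_const, smul_eq_mul] at hmono
    have : 2 ^ N * (p (j + 1) - p j) = 1 := by simp only [p]; push_cast; field_simp; ring
    calc squareFn (haarTerm c N j) N
        = 2 ^ N * ((p (j + 1) - p j) * squareFn (haarTerm c N j) N) := by
          rw [← mul_assoc, this, one_mul]
      _ ≤ _ := mul_le_mul_of_nonneg_left hmono (by positivity)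
  calc ∑ j ∈ range (2 ^ N), squareFn (haarTerm c N j) N
      ≤ ∑ j ∈ range (2 ^ N), 2 ^ N * ∫ t in p j..p (j + 1), haarSquareFn c N t :=
        sum_le_sum fun j hj => hpiece j (mem_range.mp hj)
    _ = 2 ^ N * ∫ t in Set.Ioo (0 : ℝ) 1, haarSquareFn c N t := by
        rw [← mul_sum, intervalIntegral.sum_integral_adjacent_intervals fun k _ =>
          intervalIntegrable_haarSquareFn c N _ _]
        simp [p, intervalIntegral.integral_of_le, integral_Ioc_eq_integral_Ioo]

end SquareFunction

end DyadicH1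

open DyadicH1

/-- There is a universal constant `C` such that for all finitely supported
coefficients `(a_{n,i})`,
`Σₙ (Σᵢ a_{n,i}²)^{1/2} ≤ C ‖(Σ_{n,i} a_{n,i}² h_{n,i}²/‖h_{n,i}‖₁²)^{1/2}‖_{L¹}`.
Here `‖h_{n,i}‖₁ = 2^{−n}`, so `1/‖h_{n,i}‖₁² = (2^n)²`. -/
theorem dyadic_H1_lower_bound :
    ∃ C : ℝ, 0 < C ∧ ∀ a : ℕ → ℕ → ℝ,
      (∃ N : ℕ, ∀ n, N ≤ n → ∀ i, a n i = 0) →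
      ∑' n : ℕ, Real.sqrt (∑ i ∈ Finset.Icc (1:ℕ) (2 ^ n), (a n i) ^ 2) ≤
        C * ∫ t in Set.Ioo (0:ℝ) 1,
          Real.sqrt (∑' n : ℕ, ∑ i ∈ Finset.Icc (1:ℕ) (2 ^ n),
            (a n i) ^ 2 * (haar n i t) ^ 2 * ((2:ℝ) ^ n) ^ 2) := by
  refine ⟨2, two_pos, ?_⟩
  rintro a ⟨N, hN⟩
  set c : ℕ → ℕ → ℝ := fun n q => a n (q + 1)
  have hvanish : ∀ n ∉ range N, ∀ i, a n i = 0 := fun n hn => hN n (by simpa using hn)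
  have hlhs : ∑' n, √(∑ i ∈ Icc 1 (2 ^ n), a n i ^ 2) = ∑ n ∈ range N, levelNorm c n := by
    rw [tsum_eq_sum fun n hn => by simp [hvanish n hn]]
    simp_rw [sum_Icc_one_eq_sum_range]
    rfl
  have hrhs : ∀ t, √(∑' n, ∑ i ∈ Icc 1 (2 ^ n), a n i ^ 2 * haar n i t ^ 2 * ((2 : ℝ) ^ n) ^ 2) =
      haarSquareFn c N t := fun t => by
    rw [tsum_eq_sum fun n hn => by simp [hvanish n hn]]
    simp_rw [sum_Icc_one_eq_sum_range]
    rfl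
  simp_rw [hrhs, hlhs]
  refine le_of_mul_le_mul_left ?_ (pow_pos two_pos N)
  calc (2 : ℝ) ^ N * ∑ n ∈ range N, levelNorm c n
      ≤ 2 * ∑ j ∈ range (2 ^ N), squareFn (haarTerm c N j) N := two_pow_mul_sum_levelNorm_le c N
    _ ≤ 2 * (2 ^ N * ∫ t in Set.Ioo (0 : ℝ) 1, haarSquareFn c N t) :=
        mul_le_mul_of_nonneg_left (sum_squareFn_haarTerm_le_integral c N) zero_le_two
    _ = 2 ^ N * (2 * ∫ t in Set.Ioo (0 : ℝ) 1, haarSquareFn c N t) := mul_left_comm _ _ _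
end

section
/- Let 2 < p < ∞. The linear map T defined on finitely supported sequences in the ℓ^p-sum (Σ_{n=0}^∞ ⊕ ℓ²_{2^n})_p by T e_{n,i} = h_{n,i}/‖h_{n,i}‖_{L^p} extends to a bounded linear operator from (Σ ⊕ ℓ²_{2^n})_p into L^p(0,1). -/
open Finset MeasureTheory Filter Topology

section FiniteSums

variable {ι : Type*}

theorem rpow_sum_le_sum_weight_mul (s : Finset ι) {p : ℝ} (hp : 1 ≤ p) {w b : ι → ℝ}
    (hw : ∀ i, 0 < w i) (hb : ∀ i, 0 ≤ b i) :
    (∑ i ∈ s, b i) ^ p ≤ (∑ i ∈ s, w i) ^ (p - 1) * ∑ i ∈ s, w i ^ (1 - p) * b i ^ p := by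
  have hp0 : 0 < p := by linarith
  have hweight : ∀ i, w i * (b i / w i) ^ p = w i ^ (1 - p) * b i ^ p := fun i => by
    rw [Real.div_rpow (hb i) (hw i).le, Real.rpow_sub (hw i), Real.rpow_one]; ring
  have h := Real.inner_le_weight_mul_Lp_of_nonneg s hp w (fun i => b i / w i)
    (fun i => (hw i).le) (fun i => div_nonneg (hb i) (hw i).le)
  simp only [mul_div_cancel₀ _ (hw _).ne', hweight] at h
  have hW : 0 ≤ ∑ i ∈ s, w i := sum_nonneg fun i _ => (hw i).le
  have hS : 0 ≤ ∑ i ∈ s, w i ^ (1 - p) * b i ^ p :=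
    sum_nonneg fun i _ => mul_nonneg (Real.rpow_nonneg (hw i).le _) (Real.rpow_nonneg (hb i) _)
  calc (∑ i ∈ s, b i) ^ p
      ≤ ((∑ i ∈ s, w i) ^ (1 - p⁻¹) * (∑ i ∈ s, w i ^ (1 - p) * b i ^ p) ^ p⁻¹) ^ p :=
        Real.rpow_le_rpow (sum_nonneg fun i _ => hb i) h hp0.le
    _ = _ := by
        rw [Real.mul_rpow (Real.rpow_nonneg hW _) (Real.rpow_nonneg hS _),
          ← Real.rpow_mul hW, ← Real.rpow_mul hS, inv_mul_cancel₀ hp0.ne', Real.rpow_one,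
          sub_mul, one_mul, inv_mul_cancel₀ hp0.ne']

theorem sum_pow_le_inv_one_sub (s : Finset ι) {d : ι → ℕ} (hd : Set.InjOn d s) {r : ℝ}
    (hr0 : 0 ≤ r) (hr1 : r < 1) : ∑ i ∈ s, r ^ d i ≤ (1 - r)⁻¹ := by
  classical
  rw [← sum_image hd, ← tsum_geometric_of_lt_one hr0 hr1]
  exact (summable_geometric_of_lt_one hr0 hr1).sum_le_tsum _ fun i _ => pow_nonneg hr0 i

theorem rpow_sum_le_geometric (s : Finset ι) {d : ι → ℕ} (hd : Set.InjOn d s) {p r : ℝ}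
    (hp : 1 ≤ p) (hr0 : 0 < r) (hr1 : r < 1) {b : ι → ℝ} (hb : ∀ i, 0 ≤ b i) :
    (∑ i ∈ s, b i) ^ p ≤ (1 - r) ^ (1 - p) * ∑ i ∈ s, (r ^ (1 - p)) ^ d i * b i ^ p := by
  refine (rpow_sum_le_sum_weight_mul s hp (fun i => pow_pos hr0 (d i)) hb).trans ?_
  simp_rw [Real.rpow_pow_comm hr0.le]
  refine mul_le_mul_of_nonneg_right ?_
    (sum_nonneg fun i _ =>
      mul_nonneg (Real.rpow_nonneg (pow_pos hr0 _).le _) (Real.rpow_nonneg (hb i) _))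
  calc (∑ i ∈ s, r ^ d i) ^ (p - 1) ≤ ((1 - r)⁻¹) ^ (p - 1) :=
        Real.rpow_le_rpow (sum_nonneg fun i _ => (pow_pos hr0 _).le)
          (sum_pow_le_inv_one_sub s hd hr0.le hr1) (by linarith)
    _ = (1 - r) ^ (1 - p) := by
        rw [Real.inv_rpow (by linarith), ← Real.rpow_neg (by linarith), neg_sub]

theorem rpow_sum_le_tail (S : Finset ℕ) {p r : ℝ} (hp : 1 ≤ p) (hr0 : 0 < r) (hr1 : r < 1)
    {b : ℕ → ℝ} (hb : ∀ m, 0 ≤ b m) :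
    (∑ m ∈ S, b m) ^ p ≤
      (1 - r) ^ (1 - p) * ∑ m ∈ S, b m ^ p * ∑ m' ∈ S with m ≤ m', (r ^ (1 - p)) ^ (m' - m) := by
  have hle : ∀ m ∈ S, m ≤ S.sup id := fun m hm => le_sup (f := id) hm
  have hinj : Set.InjOn (S.sup id - ·) S := fun x hx y hy h => by
    have := hle x hx; have := hle y hy; simp only at h; omega
  refine (rpow_sum_le_geometric S hinj hp hr0 hr1 hb).trans ?_
  refine mul_le_mul_of_nonneg_left (sum_le_sum fun m hm => ?_) (Real.rpow_nonneg (by linarith) _)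
  obtain ⟨M, hMS, hM⟩ := exists_mem_eq_sup S ⟨m, hm⟩ id
  rw [mul_comm, hM]
  refine mul_le_mul_of_nonneg_left ?_ (Real.rpow_nonneg (hb m) _)
  exact single_le_sum (f := fun m' => (r ^ (1 - p)) ^ (m' - m))
    (fun _ _ => pow_nonneg (Real.rpow_nonneg hr0.le _) _)
    (mem_filter.2 ⟨hMS, hM ▸ hle m hm⟩)

theorem sum_two_pow_mul_sum_tail_le (R : Finset ℕ) {ρ c : ℝ} (hρ0 : 0 ≤ ρ) (hρ : ρ < 2)
    {a x : ℕ → ℝ} (ha : ∀ m, 0 ≤ a m) (hx0 : ∀ m, 0 ≤ x m) (hx : ∀ m ∈ R, x m ≤ c / 2 ^ m) :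
    ∑ m ∈ R, 2 ^ m * a m * ∑ m' ∈ R with m ≤ m', ρ ^ (m' - m) * x m' ≤
      (1 - ρ / 2)⁻¹ * c * ∑ m ∈ R, a m := by
  rw [mul_sum]
  refine sum_le_sum fun m hm => ?_
  have hc : 0 ≤ c := by
    have := (hx0 m).trans (hx m hm)
    rwa [le_div_iff₀ (by positivity), zero_mul] at this
  calc 2 ^ m * a m * ∑ m' ∈ R with m ≤ m', ρ ^ (m' - m) * x m'
      ≤ 2 ^ m * a m * ∑ m' ∈ R with m ≤ m', ρ ^ (m' - m) * (c / 2 ^ m') := by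
        gcongr with m' hm'
        · exact mul_nonneg (by positivity) (ha m)
        · exact hx m' (mem_filter.1 hm').1
    _ = c * a m * ∑ m' ∈ R with m ≤ m', (ρ / 2) ^ (m' - m) := by
        rw [mul_sum, mul_sum]
        refine sum_congr rfl fun m' hm' => ?_
        obtain ⟨j, rfl⟩ := Nat.exists_eq_add_of_le (mem_filter.1 hm').2
        rw [Nat.add_sub_cancel_left, pow_add, div_pow]
        field_simp
    _ ≤ c * a m * (1 - ρ / 2)⁻¹ := by
        refine mul_le_mul_of_nonneg_left (sum_pow_le_inv_one_sub _ (fun x hx y hy h => ?_)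
          (by positivity) (by linarith)) (mul_nonneg hc (ha m))
        simp only [coe_filter, Set.mem_ofPred_eq] at hx hy h
        omega
    _ = _ := by ring

theorem mul_card_filter_lt_le_sum (s : Finset ι) {f : ι → ℝ} (hf : ∀ i ∈ s, 0 ≤ f i)
    (ε : ℝ) : ε * #{i ∈ s | ε < f i} ≤ ∑ i ∈ s, f i := by
  calc ε * #{i ∈ s | ε < f i} = ∑ i ∈ s with ε < f i, ε := by
        rw [sum_const, nsmul_eq_mul, mul_comm]
    _ ≤ ∑ i ∈ s with ε < f i, f i := sum_le_sum fun i hi => (mem_filter.1 hi).2.le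
    _ ≤ ∑ i ∈ s, f i := sum_le_sum_of_subset_of_nonneg (filter_subset _ _) fun i hi _ => hf i hi

theorem abs_le_sum_layers {x B : ℝ} (hx : x ^ 2 ≤ B) {K : ℕ} (hK : x = 0 ∨ B / 4 ^ K < x ^ 2) :
    |x| ≤ ∑ k ∈ range K, if B / 4 ^ (k + 1) < x ^ 2 then √B / 2 ^ k else 0 := by
  have hnonneg : ∀ k ∈ range K, 0 ≤ if B / 4 ^ (k + 1) < x ^ 2 then √B / 2 ^ k else 0 :=
    fun k _ => by split_ifs <;> positivity
  rcases hK with rfl | hK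
  · simpa using sum_nonneg hnonneg
  have hK0 : K ≠ 0 := by rintro rfl; rw [pow_zero, div_one] at hK; linarith
  have hex : ∃ k, B / 4 ^ (k + 1) < x ^ 2 := ⟨K - 1, by rwa [Nat.sub_add_cancel (by omega)]⟩
  classical
  have hlt : Nat.find hex < K := by
    have := Nat.find_min' hex (show B / 4 ^ (K - 1 + 1) < x ^ 2 by
      rwa [Nat.sub_add_cancel (Nat.one_le_iff_ne_zero.2 hK0)])
    omega
  have hle : x ^ 2 ≤ B / 4 ^ Nat.find hex := by
    rcases Nat.eq_zero_or_eq_succ_pred (Nat.find hex) with h | h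
    · rwa [h, pow_zero, div_one]
    · rw [h]; exact not_lt.1 (Nat.find_min hex (by omega))
  have habs : |x| ≤ √B / 2 ^ Nat.find hex := by
    have h4 : (4 : ℝ) ^ Nat.find hex = (2 ^ Nat.find hex) ^ 2 := by
      rw [← pow_mul, mul_comm, pow_mul]; norm_num
    rw [← Real.sqrt_sq_eq_abs, ← Real.sqrt_sq (by positivity : (0:ℝ) ≤ 2 ^ Nat.find hex), ← h4,
      ← Real.sqrt_div' _ (by positivity)]
    exact Real.sqrt_le_sqrt hle
  refine habs.trans (le_of_eq_of_le ?_ (single_le_sum hnonneg (mem_range.2 hlt)))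
  rw [if_pos (Nat.find_spec hex)]

end FiniteSums

section Packing

variable {α : Type*} {p r : ℝ} (R : Finset ℕ) (X : ℕ → Set α) {A : ℕ → ℝ}

theorem sum_mul_indicator_nonneg (hA : ∀ m, 0 ≤ A m) (t : α) :
    0 ≤ ∑ m ∈ R, 2 ^ ((m : ℝ) / p) * A m * (X m).indicator 1 t :=
  sum_nonneg fun m _ => mul_nonneg (mul_nonneg (by positivity) (hA m))
    (Set.indicator_nonneg (fun _ _ => zero_le_one) _)

theorem rpow_sum_indicator_le (hp : 1 ≤ p) (hr0 : 0 < r) (hr1 : r < 1) (hA : ∀ m, 0 ≤ A m)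
    (t : α) :
    (∑ m ∈ R, 2 ^ ((m : ℝ) / p) * A m * (X m).indicator 1 t) ^ p ≤
      (1 - r) ^ (1 - p) * ∑ m ∈ R, 2 ^ m * A m ^ p *
        ∑ m' ∈ R with m ≤ m', (r ^ (1 - p)) ^ (m' - m) * (X m').indicator 1 t := by
  classical
  have hb : ∀ m : ℕ, 0 ≤ (2 : ℝ) ^ ((m : ℝ) / p) * A m :=
    fun m => mul_nonneg (by positivity) (hA m)
  have hbp : ∀ m : ℕ, ((2 : ℝ) ^ ((m : ℝ) / p) * A m) ^ p = 2 ^ m * A m ^ p := fun m => by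
    rw [Real.mul_rpow (by positivity) (hA m), ← Real.rpow_mul (by norm_num),
      div_mul_cancel₀ _ (by linarith), Real.rpow_natCast]
  have hS : ∑ m ∈ R, 2 ^ ((m : ℝ) / p) * A m * (X m).indicator 1 t =
      ∑ m ∈ R with t ∈ X m, 2 ^ ((m : ℝ) / p) * A m := by
    rw [sum_filter]
    exact sum_congr rfl fun m _ => by by_cases h : t ∈ X m <;> simp [h]
  rw [hS]
  refine (rpow_sum_le_tail _ hp hr0 hr1 hb).trans
    (mul_le_mul_of_nonneg_left ?_ (Real.rpow_nonneg (by linarith) _))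
  simp_rw [hbp]
  refine (sum_le_sum_of_subset_of_nonneg (filter_subset _ _) fun m _ _ => ?_).trans
    (sum_le_sum fun m _ => le_of_eq ?_)
  · exact mul_nonneg (mul_nonneg (by positivity) (Real.rpow_nonneg (hA m) _))
      (sum_nonneg fun _ _ => pow_nonneg (Real.rpow_nonneg hr0.le _) _)
  · simp only [filter_filter, sum_filter, Set.indicator_apply, Pi.one_apply, mul_ite, mul_one,
      mul_zero, ← ite_and, and_comm]

variable [MeasurableSpace α] (μ : Measure α) [IsFiniteMeasure μ]

theorem integrable_rpow_sum_indicator (hp : 0 ≤ p) (hA : ∀ m, 0 ≤ A m)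
    (hX : ∀ m, MeasurableSet (X m)) :
    Integrable (fun t => (∑ m ∈ R, 2 ^ ((m : ℝ) / p) * A m * (X m).indicator 1 t) ^ p) μ := by
  refine Integrable.of_bound (by fun_prop (disch := exact hX _))
    ((∑ m ∈ R, 2 ^ ((m : ℝ) / p) * A m) ^ p) (ae_of_all _ fun t => ?_)
  have h0 := sum_mul_indicator_nonneg R X (p := p) hA t
  rw [Real.norm_eq_abs, abs_of_nonneg (Real.rpow_nonneg h0 _)]
  refine Real.rpow_le_rpow h0 (sum_le_sum fun m _ => mul_le_of_le_one_right
    (mul_nonneg (by positivity) (hA m)) ?_) hp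
  by_cases h : t ∈ X m <;> simp [h]

theorem integral_rpow_sum_indicator_le (hp : 1 ≤ p) (hr0 : 0 < r) (hr1 : r < 1)
    (hr : r ^ (1 - p) < 2) (hA : ∀ m, 0 ≤ A m) (hX : ∀ m, MeasurableSet (X m)) {c : ℝ}
    (hc : ∀ m ∈ R, μ.real (X m) ≤ c / 2 ^ m) :
    ∫ t, (∑ m ∈ R, 2 ^ ((m : ℝ) / p) * A m * (X m).indicator 1 t) ^ p ∂μ ≤
      (1 - r) ^ (1 - p) * (1 - r ^ (1 - p) / 2)⁻¹ * c * ∑ m ∈ R, A m ^ p := by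
  set ρ := r ^ (1 - p)
  have hind : ∀ m m', Integrable (fun t => ρ ^ (m' - m) * (X m').indicator 1 t) μ :=
    fun _ m' => ((integrable_const 1).indicator (hX m')).const_mul _
  calc ∫ t, (∑ m ∈ R, 2 ^ ((m : ℝ) / p) * A m * (X m).indicator 1 t) ^ p ∂μ
      ≤ ∫ t, (1 - r) ^ (1 - p) * ∑ m ∈ R, 2 ^ m * A m ^ p *
          ∑ m' ∈ R with m ≤ m', ρ ^ (m' - m) * (X m').indicator 1 t ∂μ :=
        integral_mono_of_nonneg
          (ae_of_all _ fun t => Real.rpow_nonneg (sum_mul_indicator_nonneg R X hA t) _)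
          ((integrable_finsetSum _ fun m _ =>
            (integrable_finsetSum _ fun m' _ => hind m m').const_mul _).const_mul _)
          (ae_of_all _ (rpow_sum_indicator_le R X hp hr0 hr1 hA))
    _ = (1 - r) ^ (1 - p) * ∑ m ∈ R, 2 ^ m * A m ^ p *
          ∑ m' ∈ R with m ≤ m', ρ ^ (m' - m) * μ.real (X m') := by
        rw [integral_const_mul, integral_finsetSum _ fun m _ =>
          (integrable_finsetSum _ fun m' _ => hind m m').const_mul _]
        refine congrArg _ (sum_congr rfl fun m _ => ?_)
        rw [integral_const_mul, integral_finsetSum _ fun m' _ => hind m m']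
        refine congrArg _ (sum_congr rfl fun m' _ => ?_)
        rw [integral_const_mul, integral_indicator_one (hX m')]
    _ ≤ (1 - r) ^ (1 - p) * ((1 - ρ / 2)⁻¹ * c * ∑ m ∈ R, A m ^ p) := by
        gcongr
        exact sum_two_pow_mul_sum_tail_le R (Real.rpow_nonneg hr0.le _) hr
          (fun m => Real.rpow_nonneg (hA m) _) (fun _ => measureReal_nonneg) hc
    _ = _ := by ring

end Packing

theorem integral_rpow_le_of_abs_le_sum {α : Type*} [MeasurableSpace α] (μ : Measure α)
    {p r θ : ℝ} (hp : 1 ≤ p) (hr0 : 0 < r) (hr1 : r < 1) (hθ : 0 ≤ θ) (hθr : θ * r ^ (1 - p) < 1)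
    (s : Finset ℕ) {f : α → ℝ} {y : ℕ → α → ℝ} (hy : ∀ k t, 0 ≤ y k t)
    (hf : ∀ t, |f t| ≤ ∑ k ∈ s, y k t) (hint : ∀ k, Integrable (fun t => y k t ^ p) μ)
    {D : ℝ} (hD : ∀ k, ∫ t, y k t ^ p ∂μ ≤ D * θ ^ k) :
    ∫ t, |f t| ^ p ∂μ ≤ (1 - r) ^ (1 - p) * (1 - θ * r ^ (1 - p))⁻¹ * D := by
  set ρ := r ^ (1 - p)
  have hρ : 0 ≤ ρ := Real.rpow_nonneg hr0.le _
  have hD0 : 0 ≤ D := by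
    simpa using (integral_nonneg fun t => Real.rpow_nonneg (hy 0 t) p).trans (hD 0)
  calc ∫ t, |f t| ^ p ∂μ ≤ ∫ t, (1 - r) ^ (1 - p) * ∑ k ∈ s, ρ ^ k * y k t ^ p ∂μ :=
        integral_mono_of_nonneg (ae_of_all _ fun t => Real.rpow_nonneg (abs_nonneg _) _)
          ((integrable_finsetSum _ fun k _ => (hint k).const_mul _).const_mul _)
          (ae_of_all _ fun t => (Real.rpow_le_rpow (abs_nonneg _) (hf t) (by linarith)).trans
            (rpow_sum_le_geometric s (Set.injOn_id _) hp hr0 hr1 (hy · t)))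
    _ = (1 - r) ^ (1 - p) * ∑ k ∈ s, ρ ^ k * ∫ t, y k t ^ p ∂μ := by
        rw [integral_const_mul, integral_finsetSum _ fun k _ => (hint k).const_mul _]
        simp only [integral_const_mul]
    _ ≤ (1 - r) ^ (1 - p) * ∑ k ∈ s, ρ ^ k * (D * θ ^ k) := by
        gcongr with k
        exact hD k
    _ = (1 - r) ^ (1 - p) * D * ∑ k ∈ s, (θ * ρ) ^ k := by
        rw [mul_assoc ((1 - r) ^ (1 - p)), mul_sum s _ D]
        exact congrArg _ (sum_congr rfl fun k _ => by rw [mul_pow]; ring)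
    _ ≤ (1 - r) ^ (1 - p) * D * (1 - θ * ρ)⁻¹ := by
        gcongr
        exact sum_pow_le_inv_one_sub s (Set.injOn_id _) (by positivity) hθr
    _ = _ := by ring

theorem exists_rpow_one_sub_lt (p : ℝ) {L : ℝ} (hL : 1 < L) :
    ∃ r, 0 < r ∧ r < 1 ∧ r ^ (1 - p) < L := by
  have hcont : Tendsto (fun r : ℝ => r ^ (1 - p)) (𝓝[<] 1) (𝓝 1) := by
    simpa using ((Real.continuousAt_rpow_const 1 (1 - p) (Or.inl one_ne_zero)).tendsto).mono_left
      nhdsWithin_le_nhds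
  obtain ⟨r, hr, hr01⟩ := ((hcont.eventually_lt_const hL).and (Ioo_mem_nhdsLT zero_lt_one)).exists
  exact ⟨r, hr01.1, hr01.2, hr⟩

def dyadicInterval (n i : ℕ) : Set ℝ := Set.Ico (((i : ℝ) - 1) / 2 ^ n) (i / 2 ^ n)

theorem abs_haar_le_indicator (n i : ℕ) (t : ℝ) :
    |haar n i t| ≤ (dyadicInterval n i).indicator 1 t := by
  have hmid : (2 * (i : ℝ) - 1) / 2 ^ (n + 1) = ((i : ℝ) - 1 / 2) / 2 ^ n := by
    rw [pow_succ]; field_simp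
  have hlo : ((i : ℝ) - 1) / 2 ^ n ≤ ((i : ℝ) - 1 / 2) / 2 ^ n := by gcongr; linarith
  have hhi : ((i : ℝ) - 1 / 2) / 2 ^ n ≤ i / 2 ^ n := by gcongr; linarith
  unfold haar
  rw [hmid]
  by_cases ht : t ∈ dyadicInterval n i
  · rw [Set.indicator_of_mem ht]
    split_ifs <;> norm_num
  · rw [Set.indicator_of_notMem ht]
    simp only [dyadicInterval, Set.mem_Ico, not_and_or, not_le, not_lt] at ht
    split_ifs with h1 h2
    · rcases ht with ht | ht <;> linarith [h1.1, h1.2]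
    · rcases ht with ht | ht <;> linarith [h2.1, h2.2]
    · simp

theorem pairwiseDisjoint_dyadicInterval (n : ℕ) (s : Set ℕ) :
    s.PairwiseDisjoint (dyadicInterval n) := by
  intro i _ j _ hij
  rw [Function.onFun, Set.disjoint_left]
  rintro t ⟨hi₁, hi₂⟩ ⟨hj₁, hj₂⟩
  have h₁ := hi₁.trans_lt hj₂
  have h₂ := hj₁.trans_lt hi₂
  rw [div_lt_div_iff_of_pos_right (by positivity)] at h₁ h₂
  have : i < j + 1 := by exact_mod_cast (by linarith : (i : ℝ) < j + 1)
  have : j < i + 1 := by exact_mod_cast (by linarith : (j : ℝ) < i + 1)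
  omega

theorem sum_abs_haar_le_indicator_biUnion (n : ℕ) (E : Finset ℕ) (t : ℝ) :
    ∑ i ∈ E, |haar n i t| ≤ (⋃ i ∈ E, dyadicInterval n i).indicator 1 t := by
  rw [Finset.indicator_biUnion_apply E _ (pairwiseDisjoint_dyadicInterval n _)]
  exact sum_le_sum fun i _ => abs_haar_le_indicator n i t

theorem measureReal_biUnion_dyadicInterval_le (s : Set ℝ) (n : ℕ) (E : Finset ℕ) :
    (volume.restrict s).real (⋃ i ∈ E, dyadicInterval n i) ≤ #E / 2 ^ n := by
  calc (volume.restrict s).real (⋃ i ∈ E, dyadicInterval n i)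
      ≤ ∑ i ∈ E, (volume.restrict s).real (dyadicInterval n i) := measureReal_biUnion_finset_le _ _
    _ ≤ ∑ i ∈ E, volume.real (dyadicInterval n i) := by
        gcongr with i
        exact ENNReal.toReal_mono (by simp [dyadicInterval]) (Measure.restrict_apply_le _ _)
    _ = #E / 2 ^ n := by
        simp only [dyadicInterval]
        rw [sum_congr rfl fun i _ => Real.volume_real_Ico_of_le (by gcongr; linarith)]
        simp only [← sub_div, sub_sub_cancel, sum_const, nsmul_eq_mul]
        ring

section HaarCoefficients

variable (a : ℕ → ℕ → ℝ)

noncomputable def levelSqNorm (n : ℕ) : ℝ := ∑ i ∈ Icc 1 (2 ^ n), a n i ^ 2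

noncomputable def largeCoeffs (n k : ℕ) : Finset ℕ :=
  {i ∈ Icc 1 (2 ^ n) | levelSqNorm a n / 4 ^ (k + 1) < a n i ^ 2}

def largeCoeffSupport (n k : ℕ) : Set ℝ := ⋃ i ∈ largeCoeffs a n k, dyadicInterval n i

noncomputable def haarSum (p : ℝ) (N : ℕ) (t : ℝ) : ℝ :=
  ∑ n ∈ range N, ∑ i ∈ Icc 1 (2 ^ n), a n i * 2 ^ ((n : ℝ) / p) * haar n i t

theorem levelSqNorm_nonneg (n : ℕ) : 0 ≤ levelSqNorm a n :=
  sum_nonneg fun _ _ => sq_nonneg _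

theorem sq_le_levelSqNorm {n i : ℕ} (hi : i ∈ Icc 1 (2 ^ n)) : a n i ^ 2 ≤ levelSqNorm a n :=
  single_le_sum (f := fun i => a n i ^ 2) (fun _ _ => sq_nonneg _) hi

theorem card_largeCoeffs_le (n k : ℕ) : (#(largeCoeffs a n k) : ℝ) ≤ 4 ^ (k + 1) := by
  rcases (levelSqNorm_nonneg a n).eq_or_lt with hB | hB
  · rw [largeCoeffs, filter_false_of_mem fun i hi => by
      rw [← hB, zero_div, not_lt]; exact (sq_le_levelSqNorm a hi).trans hB.ge]
    simp
  · have h := mul_card_filter_lt_le_sum (Icc 1 (2 ^ n)) (f := fun i => a n i ^ 2)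
      (fun i _ => sq_nonneg (a n i))
      (levelSqNorm a n / 4 ^ (k + 1))
    rw [div_mul_eq_mul_div, div_le_iff₀ (by positivity)] at h
    exact le_of_mul_le_mul_left h hB

theorem measurableSet_largeCoeffSupport (n k : ℕ) : MeasurableSet (largeCoeffSupport a n k) :=
  Finset.measurableSet_biUnion _ fun _ _ => measurableSet_Ico

theorem exists_levelSqNorm_div_pow_lt (N : ℕ) : ∃ K, ∀ n ∈ range N, ∀ i ∈ Icc 1 (2 ^ n),
    a n i = 0 ∨ levelSqNorm a n / 4 ^ K < a n i ^ 2 := by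
  have h : ∀ᶠ K in atTop, ∀ n ∈ range N, ∀ i ∈ Icc 1 (2 ^ n),
      a n i = 0 ∨ levelSqNorm a n / 4 ^ K < a n i ^ 2 := by
    simp only [eventually_all_finset]
    intro n _ i _
    by_cases ha : a n i = 0
    · exact Eventually.of_forall fun _ => Or.inl ha
    · have hlim := tendsto_const_nhds (x := levelSqNorm a n).div_atTop
        (tendsto_pow_atTop_atTop_of_one_lt (by norm_num : (1 : ℝ) < 4))
      exact (hlim.eventually_lt_const (by positivity)).mono fun _ h => Or.inr h
  exact h.exists

theorem sum_abs_mul_abs_haar_le {n K : ℕ}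
    (hK : ∀ i ∈ Icc 1 (2 ^ n), a n i = 0 ∨ levelSqNorm a n / 4 ^ K < a n i ^ 2) (t : ℝ) :
    ∑ i ∈ Icc 1 (2 ^ n), |a n i| * |haar n i t| ≤
      ∑ k ∈ range K, √(levelSqNorm a n) / 2 ^ k * (largeCoeffSupport a n k).indicator 1 t := by
  calc ∑ i ∈ Icc 1 (2 ^ n), |a n i| * |haar n i t|
      ≤ ∑ i ∈ Icc 1 (2 ^ n), (∑ k ∈ range K, if levelSqNorm a n / 4 ^ (k + 1) < a n i ^ 2
          then √(levelSqNorm a n) / 2 ^ k else 0) * |haar n i t| :=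
        sum_le_sum fun i hi => mul_le_mul_of_nonneg_right
          (abs_le_sum_layers (sq_le_levelSqNorm a hi) (hK i hi)) (abs_nonneg _)
    _ = ∑ k ∈ range K, √(levelSqNorm a n) / 2 ^ k * ∑ i ∈ largeCoeffs a n k, |haar n i t| := by
        simp only [sum_mul, ite_mul, zero_mul, largeCoeffs, sum_filter, mul_sum, mul_ite, mul_zero]
        rw [sum_comm]
    _ ≤ _ := by
        gcongr with k
        exact sum_abs_haar_le_indicator_biUnion n _ t

theorem abs_haarSum_le {p : ℝ} {N K : ℕ} (hK : ∀ n ∈ range N, ∀ i ∈ Icc 1 (2 ^ n),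
    a n i = 0 ∨ levelSqNorm a n / 4 ^ K < a n i ^ 2) (t : ℝ) :
    |haarSum a p N t| ≤ ∑ k ∈ range K, ∑ n ∈ range N, 2 ^ ((n : ℝ) / p) *
      (√(levelSqNorm a n) / 2 ^ k) * (largeCoeffSupport a n k).indicator 1 t := by
  calc |haarSum a p N t|
      ≤ ∑ n ∈ range N, 2 ^ ((n : ℝ) / p) * ∑ i ∈ Icc 1 (2 ^ n), |a n i| * |haar n i t| := by
        refine (abs_sum_le_sum_abs _ _).trans (sum_le_sum fun n _ => ?_)
        rw [mul_sum]
        refine (abs_sum_le_sum_abs _ _).trans (le_of_eq (sum_congr rfl fun i _ => ?_))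
        rw [abs_mul, abs_mul, abs_of_pos (by positivity : (0:ℝ) < 2 ^ ((n : ℝ) / p))]
        ring
    _ ≤ ∑ n ∈ range N, 2 ^ ((n : ℝ) / p) * ∑ k ∈ range K,
          √(levelSqNorm a n) / 2 ^ k * (largeCoeffSupport a n k).indicator 1 t := by
        gcongr with n hn
        exact sum_abs_mul_abs_haar_le a (hK n hn) t
    _ = _ := by
        simp only [mul_sum]
        rw [sum_comm]
        simp only [mul_assoc]

theorem integral_rpow_layer_le {p r : ℝ} (hp : 1 ≤ p) (hr0 : 0 < r) (hr1 : r < 1)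
    (hr : r ^ (1 - p) < 2) (N k : ℕ) :
    ∫ t in Set.Ioo (0 : ℝ) 1, (∑ n ∈ range N, 2 ^ ((n : ℝ) / p) *
        (√(levelSqNorm a n) / 2 ^ k) * (largeCoeffSupport a n k).indicator 1 t) ^ p ≤
      (1 - r) ^ (1 - p) * (1 - r ^ (1 - p) / 2)⁻¹ * 4 *
        (∑ n ∈ range N, levelSqNorm a n ^ (p / 2)) * (4 / 2 ^ p) ^ k := by
  have hpow : ∀ n, (√(levelSqNorm a n) / 2 ^ k) ^ p = levelSqNorm a n ^ (p / 2) / (2 ^ p) ^ k :=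
    fun n => by
      rw [Real.div_rpow (Real.sqrt_nonneg _) (by positivity), Real.sqrt_eq_rpow,
        ← Real.rpow_mul (levelSqNorm_nonneg a n), ← Real.rpow_pow_comm (by norm_num : (0:ℝ) ≤ 2),
        one_div_mul_eq_div]
  refine (integral_rpow_sum_indicator_le _ _ _ hp hr0 hr1 hr (fun n => by positivity)
    (fun n => measurableSet_largeCoeffSupport a n k) fun n _ =>
      (measureReal_biUnion_dyadicInterval_le _ n _).trans
        (by gcongr; exact card_largeCoeffs_le a n k)).trans_eq ?_
  simp only [hpow, ← sum_div, div_pow, pow_succ]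
  field_simp

end HaarCoefficients

theorem exists_integral_rpow_abs_haarSum_le {p : ℝ} (hp : 2 < p) :
    ∃ C > 0, ∀ (a : ℕ → ℕ → ℝ) (N : ℕ),
      ∫ t in Set.Ioo (0 : ℝ) 1, |haarSum a p N t| ^ p ≤
        C * ∑ n ∈ range N, levelSqNorm a n ^ (p / 2) := by
  obtain ⟨r₁, hr₁0, hr₁1, hρ₁⟩ := exists_rpow_one_sub_lt p one_lt_two
  have h4 : 1 < (2 : ℝ) ^ p / 4 := by
    rw [one_lt_div (by norm_num), show (4 : ℝ) = 2 ^ (2 : ℝ) by norm_num]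
    exact Real.rpow_lt_rpow_of_exponent_lt (by norm_num) hp
  obtain ⟨r₂, hr₂0, hr₂1, hρ₂⟩ := exists_rpow_one_sub_lt p h4
  have hθ : 4 / 2 ^ p * r₂ ^ (1 - p) < 1 := by
    rwa [div_mul_eq_mul_div, div_lt_one (by positivity), ← lt_div_iff₀' (by norm_num)]
  set C₁ := (1 - r₁) ^ (1 - p) * (1 - r₁ ^ (1 - p) / 2)⁻¹ * 4
  have hC₁ : 0 < C₁ :=
    mul_pos (mul_pos (Real.rpow_pos_of_pos (by linarith) _) (inv_pos.2 (by linarith))) four_pos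
  refine ⟨(1 - r₂) ^ (1 - p) * (1 - 4 / 2 ^ p * r₂ ^ (1 - p))⁻¹ * C₁,
    mul_pos (mul_pos (Real.rpow_pos_of_pos (by linarith) _) (inv_pos.2 (by linarith))) hC₁,
    fun a N => ?_⟩
  obtain ⟨K, hK⟩ := exists_levelSqNorm_div_pow_lt a N
  rw [mul_assoc]
  exact integral_rpow_le_of_abs_le_sum _ (by linarith) hr₂0 hr₂1 (by positivity) hθ (range K)
    (fun k => sum_mul_indicator_nonneg _ _ fun n => by positivity) (abs_haarSum_le a hK)
    (fun k => integrable_rpow_sum_indicator _ _ _ (by linarith) (fun n => by positivity)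
      (fun n => measurableSet_largeCoeffSupport a n k))
    (integral_rpow_layer_le a (by linarith) hr₁0 hr₁1 hρ₁ N)

/-- For `2 < p < ∞` the basis-to-basis map
`e_{n,i} ↦ h_{n,i}/‖h_{n,i}‖_p` extends to a bounded operator from
`(Σₙ ⊕ ℓ²_{2^n})_p` to `L^p(0,1)`: there is `C_p` with
`‖Σ_{n,i} a_{n,i} h_{n,i}/‖h_{n,i}‖_p‖_{L^p} ≤ C_p (Σₙ(Σᵢ a_{n,i}²)^{p/2})^{1/p}`
for all finitely supported `(a_{n,i})`.  Here `1/‖h_{n,i}‖_p = 2^{n/p}`. -/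
theorem haar_operator_bounded (p : ℝ) (hp2 : 2 < p) :
    ∃ C : ℝ, 0 < C ∧ ∀ a : ℕ → ℕ → ℝ,
      (∃ N : ℕ, ∀ n, N ≤ n → ∀ i, a n i = 0) →
      (∫ t in Set.Ioo (0:ℝ) 1,
          |∑' n : ℕ, ∑ i ∈ Finset.Icc (1:ℕ) (2 ^ n),
              a n i * (2:ℝ) ^ ((n:ℝ) / p) * haar n i t| ^ p) ^ (1 / p) ≤
        C * (∑' n : ℕ,
              (∑ i ∈ Finset.Icc (1:ℕ) (2 ^ n), (a n i) ^ 2) ^ (p / 2)) ^ (1 / p) := by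
  obtain ⟨C, hC, hbound⟩ := exists_integral_rpow_abs_haarSum_le hp2
  refine ⟨C ^ (1 / p), Real.rpow_pos_of_pos hC _, fun a ⟨N, hN⟩ => ?_⟩
  have hvanish : ∀ n ∉ range N, ∀ i, a n i = 0 := fun n hn => hN n (not_lt.1 (mem_range.not.1 hn))
  have hsum : ∀ t, ∑' n : ℕ, ∑ i ∈ Icc 1 (2 ^ n), a n i * (2:ℝ) ^ ((n:ℝ) / p) * haar n i t =
      haarSum a p N t := fun t =>
    tsum_eq_sum fun n hn => sum_eq_zero fun i _ => by simp [hvanish n hn i]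
  have hnorm : ∑' n : ℕ, (∑ i ∈ Icc 1 (2 ^ n), a n i ^ 2) ^ (p / 2) =
      ∑ n ∈ range N, levelSqNorm a n ^ (p / 2) :=
    tsum_eq_sum fun n hn => by simp [hvanish n hn, Real.zero_rpow (by linarith : p / 2 ≠ 0)]
  simp only [hsum, hnorm]
  calc (∫ t in Set.Ioo (0:ℝ) 1, |haarSum a p N t| ^ p) ^ (1 / p)
      ≤ (C * ∑ n ∈ range N, levelSqNorm a n ^ (p / 2)) ^ (1 / p) :=
        Real.rpow_le_rpow (integral_nonneg fun t => by positivity) (hbound a N) (by positivity)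
    _ = C ^ (1 / p) * (∑ n ∈ range N, levelSqNorm a n ^ (p / 2)) ^ (1 / p) :=
        Real.mul_rpow hC.le (sum_nonneg fun n _ => Real.rpow_nonneg (levelSqNorm_nonneg a n) _)
end

section
/- Let T_ε denote convolution on the Cantor group {−1,1}^ℕ with the Riesz product measure ∏_{i=1}^∞ (1 + ε r_i), 0 < ε < 1. Then for every finite ±1-sequence δ = (δ₁,…,δ_n), T_ε applied to the (multiplicatively written) Haar function h_δ = r_{n+1} ∏_{i=1}^n (1 + δ_i r_i) equals ε r_{n+1} ∏_{i=1}^n (1 + ε δ_i r_i), and consequently ‖T_ε h_δ‖_{L¹} = ε. -/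
open MeasureTheory

/-- The Cantor group `{−1,1}^ℕ`, modelled as `ℕ → ℤˣ`. -/
abbrev CantorGroup : Type := ℕ → ℤˣ

/-- The Rademacher function `r_j` (coordinate projection). -/
noncomputable def rad (j : ℕ) (ω : CantorGroup) : ℝ := ((ω j : ℤ) : ℝ)

/-- Interpret a boolean as a sign `±1`. -/
noncomputable def sgn (b : Bool) : ℝ := if b then 1 else -1

/-- The Walsh function `w_A = ∏_{i ∈ A} r_i`. -/
noncomputable def walsh (A : Finset ℕ) (ω : CantorGroup) : ℝ := ∏ j ∈ A, rad j ω

/-- The multiplicatively written Haar function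
`h_{(δ₁,…,δ_n)} = r_{n+1} ∏_{i=1}^n (1 + δ_i r_i)`. -/
noncomputable def haarSys (δ : List Bool) (ω : CantorGroup) : ℝ :=
  rad (δ.length + 1) ω *
    ∏ i ∈ Finset.range δ.length, (1 + sgn (δ.getD i true) * rad (i + 1) ω)

/- ## Auxiliary lemmas -/

lemma rad_measurable (j : ℕ) : Measurable (rad j) :=
  measurable_from_top.comp
    ((measurable_iff_comap_le.mpr le_rfl : Measurable ((↑) : ℤˣ → ℤ)).comp
      (measurable_pi_apply j))

lemma rad_abs (j : ℕ) (ω : CantorGroup) : |rad j ω| = 1 := by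
  rcases Int.units_eq_one_or (ω j) with h | h <;> simp [rad, h]

lemma sgn_abs (b : Bool) : |sgn b| = 1 := by cases b <;> simp [sgn]

lemma walsh_measurable (A : Finset ℕ) : Measurable (walsh A) := by
  unfold walsh
  exact Finset.measurable_prod _ fun j _ => rad_measurable j

lemma walsh_abs (A : Finset ℕ) (ω : CantorGroup) : |walsh A ω| = 1 := by
  unfold walsh
  rw [Finset.abs_prod]
  simp [rad_abs]

lemma walsh_integrable (A : Finset ℕ) (μ : Measure CantorGroup) [IsProbabilityMeasure μ] :
    Integrable (walsh A) μ := by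
  refine (integrable_const (1 : ℝ)).mono' (walsh_measurable A).aestronglyMeasurable ?_
  filter_upwards with ω
  rw [Real.norm_eq_abs, walsh_abs]

/-- Expansion of the Riesz-type product into Walsh functions. -/
lemma riesz_expand (a : ℕ → ℝ) (n : ℕ) (ω : CantorGroup) :
    rad (n + 1) ω * ∏ i ∈ Finset.range n, (1 + a i * rad (i + 1) ω)
    = ∑ S ∈ (Finset.range n).powerset,
        (∏ i ∈ S, a i) * walsh (insert (n + 1) (S.image (· + 1))) ω := by
  have h : ∀ i, (1 + a i * rad (i + 1) ω) = (a i * rad (i + 1) ω) + 1 := fun i => by ring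
  simp_rw [h]
  rw [Finset.prod_add, Finset.mul_sum]
  refine Finset.sum_congr rfl fun S hS => ?_
  have hSsub := Finset.mem_powerset.mp hS
  have hnot : (n + 1) ∉ S.image (· + 1) := by
    intro hmem
    obtain ⟨i, hi, hieq⟩ := Finset.mem_image.mp hmem
    have := Finset.mem_range.mp (hSsub hi)
    omega
  rw [Finset.prod_const_one, mul_one, Finset.prod_mul_distrib]
  show rad (n + 1) ω * ((∏ i ∈ S, a i) * ∏ i ∈ S, rad (i + 1) ω) = _
  rw [walsh, Finset.prod_insert hnot,
    Finset.prod_image (fun x _ y _ h => by omega : ∀ x ∈ S, ∀ y ∈ S, x + 1 = y + 1 → x = y)]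
  ring

/-- The biased coin operator `T_ε` (convolution with the Riesz product
`∏(1 + ε r_i)`), which acts on Walsh functions by `T_ε w_A = ε^{|A|} w_A`, sends the Haar
function `h_δ = r_{n+1} ∏_{i=1}^n (1 + δ_i r_i)` to `ε r_{n+1} ∏_{i=1}^n (1 + ε δ_i r_i)`,
and consequently `‖T_ε h_δ‖_{L¹} = ε`.  Here `μ` is the Haar (product uniform) probability
measure on the Cantor group. -/
theorem biased_coin_on_haar
    (μ : Measure CantorGroup) [IsProbabilityMeasure μ]
    (hμ : ∀ A : Finset ℕ, A.Nonempty → ∫ ω, walsh A ω ∂μ = 0)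
    (ε : ℝ) (hε0 : 0 < ε) (hε1 : ε < 1)
    (T : (CantorGroup → ℝ) →ₗ[ℝ] (CantorGroup → ℝ))
    (hT : ∀ A : Finset ℕ, T (walsh A) = fun ω => ε ^ A.card * walsh A ω) :
    ∀ δ : List Bool,
      T (haarSys δ) = (fun ω => ε * rad (δ.length + 1) ω *
        ∏ i ∈ Finset.range δ.length,
          (1 + ε * sgn (δ.getD i true) * rad (i + 1) ω)) ∧
      ∫ ω, |T (haarSys δ) ω| ∂μ = ε := by
  intro δ
  set n := δ.length with hn
  set c : ℕ → ℝ := fun i => sgn (δ.getD i true) with hc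
  -- cardinality of the inserted set
  have hcard : ∀ S ∈ (Finset.range n).powerset,
      (insert (n + 1) (S.image (· + 1))).card = S.card + 1 := by
    intro S hS
    have hSsub := Finset.mem_powerset.mp hS
    have hnot : (n + 1) ∉ S.image (· + 1) := by
      intro hmem
      obtain ⟨i, hi, hieq⟩ := Finset.mem_image.mp hmem
      have := Finset.mem_range.mp (hSsub hi)
      omega
    rw [Finset.card_insert_of_notMem hnot,
      Finset.card_image_of_injective _ (fun x y h => by omega)]
  -- the Haar function as linear combination of Walsh functions
  have hfun : haarSys δ = ∑ S ∈ (Finset.range n).powerset,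
      (∏ i ∈ S, c i) • walsh (insert (n + 1) (S.image (· + 1))) := by
    funext ω
    rw [Finset.sum_apply]
    simp only [Pi.smul_apply, smul_eq_mul]
    exact riesz_expand c n ω
  -- Part 1
  have h1 : T (haarSys δ) = (fun ω => ε * rad (n + 1) ω *
      ∏ i ∈ Finset.range n, (1 + ε * c i * rad (i + 1) ω)) := by
    rw [hfun, map_sum]
    funext ω
    rw [Finset.sum_apply]
    simp only [_root_.map_smul, hT, Pi.smul_apply, smul_eq_mul]
    have hR : ε * rad (n + 1) ω * ∏ i ∈ Finset.range n, (1 + ε * c i * rad (i + 1) ω)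
        = ∑ S ∈ (Finset.range n).powerset,
            ε * ((∏ i ∈ S, ε * c i) * walsh (insert (n + 1) (S.image (· + 1))) ω) := by
      rw [mul_assoc, riesz_expand (fun i => ε * c i) n ω, Finset.mul_sum]
    rw [hR]
    refine Finset.sum_congr rfl fun S hS => ?_
    rw [Finset.prod_mul_distrib, Finset.prod_const, hcard S hS]
    ring
  refine ⟨h1, ?_⟩
  -- Part 2
  rw [h1]
  have hcabs : ∀ i, |c i| = 1 := fun i => sgn_abs _
  have hfac : ∀ i (ω : CantorGroup), 0 < 1 + ε * c i * rad (i + 1) ω := by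
    intro i ω
    have habs : |ε * c i * rad (i + 1) ω| = ε := by
      rw [abs_mul, abs_mul, hcabs, rad_abs, abs_of_pos hε0]; ring
    have := abs_lt.mp (habs ▸ hε1)
    linarith
  have hptw : ∀ ω : CantorGroup,
      |ε * rad (n + 1) ω * ∏ i ∈ Finset.range n, (1 + ε * c i * rad (i + 1) ω)|
      = ε * ∏ i ∈ Finset.range n, (1 + ε * c i * rad (i + 1) ω) := by
    intro ω
    rw [abs_mul, abs_mul, rad_abs, abs_of_pos hε0,
      abs_of_nonneg (Finset.prod_nonneg fun i _ => (hfac i ω).le)]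
    ring
  simp only [hptw]
  have hPint : ∫ ω, ∏ i ∈ Finset.range n, (1 + ε * c i * rad (i + 1) ω) ∂μ = 1 := by
    have hexp : ∀ ω : CantorGroup, ∏ i ∈ Finset.range n, (1 + ε * c i * rad (i + 1) ω)
        = ∑ S ∈ (Finset.range n).powerset,
            (∏ i ∈ S, ε * c i) * walsh (S.image (· + 1)) ω := by
      intro ω
      have h : ∀ i, (1 + ε * c i * rad (i + 1) ω) = (ε * c i * rad (i + 1) ω) + 1 :=
        fun i => by ring
      simp_rw [h]
      rw [Finset.prod_add]
      refine Finset.sum_congr rfl fun S hS => ?_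
      rw [Finset.prod_const_one, mul_one, Finset.prod_mul_distrib]
      congr 1
      rw [walsh, Finset.prod_image
        (fun x _ y _ h => by omega : ∀ x ∈ S, ∀ y ∈ S, x + 1 = y + 1 → x = y)]
    simp_rw [hexp]
    rw [integral_finset_sum _ (fun S _ => ((walsh_integrable _ μ).const_mul _))]
    rw [Finset.sum_eq_single_of_mem ∅ (Finset.empty_mem_powerset _)]
    · simp [walsh]
    · intro S hS hne
      rw [MeasureTheory.integral_const_mul, hμ _ (Finset.image_nonempty.mpr
        (Finset.nonempty_iff_ne_empty.mpr hne)), mul_zero]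
  rw [integral_const_mul, hPint, mul_one]
end
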